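/- arXiv:2404.10015 — 10 statements merged into one kernel-verified Lean document; each statement's English description precedes it below -/
import Mathlib

section
/- Let a_1 > a_2 > ... > a_n > 0 and let x* ∈ S_n minimize G(x) = Σ_{i=1}^n a_i/(1+x_i) over the simplex S_n = {x : x_1 + ... + x_n = 1, x_i ≥ 0}. Then the coordinates of x* are nonincreasing: x*_1 ≥ x*_2 ≥ ... ≥ x*_n; moreover, for each i with 1 ≤ i < n, if x*_i > 0 or x*_{i+1} > 0, then x*_i > x*_{i+1}. -/
/-- if `x` minimizes `G y = ∑ i, a i / (1 + y i)` over the simplex, then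
its coordinates are nonincreasing, and any two adjacent coordinates not both zero are
strictly decreasing. -/
theorem stmt_5 (n : ℕ) (hn : 2 ≤ n) (a : Fin n → ℝ)
    (ha : StrictAnti a) (hpos : ∀ i, 0 < a i)
    (x : Fin n → ℝ) (hx : ∑ i, x i = 1 ∧ ∀ i, 0 ≤ x i)
    (hmin : ∀ y : Fin n → ℝ, (∑ i, y i = 1 ∧ ∀ i, 0 ≤ y i) →
      ∑ i, a i / (1 + x i) ≤ ∑ i, a i / (1 + y i)) :
    Antitone x ∧
    ∀ i : Fin n, ∀ h : (i : ℕ) + 1 < n,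
      (0 < x i ∨ 0 < x ⟨(i : ℕ) + 1, h⟩) → x ⟨(i : ℕ) + 1, h⟩ < x i := by
  obtain ⟨hsum, hnn⟩ := hx
  have hden : ∀ k, (0:ℝ) < 1 + x k := fun k => by linarith [hnn k]
  have key : ∀ (i j : Fin n), i ≠ j → ∀ u v : ℝ, 0 ≤ u → 0 ≤ v → u + v = x i + x j →
      a i / (1 + x i) + a j / (1 + x j) ≤ a i / (1 + u) + a j / (1 + v) := by
    intro i j hij u v hu hv huv
    set y : Fin n → ℝ := fun k => if k = i then u else if k = j then v else x k with hy
    have h1 : ∀ k, y k = x k + ((if k = i then u - x i else 0) + (if k = j then v - x j else 0)) := by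
      intro k
      simp only [hy]
      by_cases hk : k = i
      · subst hk; rw [if_pos rfl, if_pos rfl, if_neg hij]; ring
      · by_cases hk' : k = j
        · subst hk'; rw [if_neg hk, if_neg hk, if_pos rfl, if_pos rfl]; ring
        · rw [if_neg hk, if_neg hk, if_neg hk', if_neg hk']; ring
    have hys : ∑ k, y k = 1 := by
      simp only [h1, Finset.sum_add_distrib, Finset.sum_ite_eq', Finset.mem_univ, if_true]
      rw [hsum]; linarith
    have hyn : ∀ k, 0 ≤ y k := by
      intro k
      simp only [hy]
      split_ifs
      exacts [hu, hv, hnn k]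
    have h2 : ∀ k, a k / (1 + y k) = a k / (1 + x k) +
        ((if k = i then a i / (1 + u) - a i / (1 + x i) else 0) +
         (if k = j then a j / (1 + v) - a j / (1 + x j) else 0)) := by
      intro k
      simp only [hy]
      by_cases hk : k = i
      · subst hk; rw [if_pos rfl, if_pos rfl, if_neg hij]; ring
      · by_cases hk' : k = j
        · subst hk'; rw [if_neg hk, if_neg hk, if_pos rfl, if_pos rfl]; ring
        · rw [if_neg hk, if_neg hk, if_neg hk', if_neg hk']; ring
    have hmin' := hmin y ⟨hys, hyn⟩
    have h3 : ∑ k, a k / (1 + y k) = (∑ k, a k / (1 + x k)) +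
        ((a i / (1 + u) - a i / (1 + x i)) + (a j / (1 + v) - a j / (1 + x j))) := by
      simp only [h2, Finset.sum_add_distrib, Finset.sum_ite_eq', Finset.mem_univ, if_true]
    rw [h3] at hmin'
    linarith
  have hmono : ∀ i j : Fin n, i < j → x j ≤ x i := by
    intro i j hij
    by_contra hlt
    push_neg at hlt
    have haij : a j < a i := ha hij
    have h := key i j (ne_of_lt hij) (x j) (x i) (hnn j) (hnn i) (by ring)
    have hi := hden i; have hj := hden j
    rw [div_add_div _ _ (ne_of_gt hi) (ne_of_gt hj),
        div_add_div _ _ (ne_of_gt hj) (ne_of_gt hi),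
        div_le_div_iff₀ (by positivity) (by positivity)] at h
    nlinarith [mul_pos (mul_pos hi hj) (mul_pos (sub_pos.mpr haij) (sub_pos.mpr hlt))]
  constructor
  · intro i j hij
    rcases eq_or_lt_of_le hij with h | h
    · rw [h]
    · exact hmono i j h
  intro i h hposx
  set j : Fin n := ⟨(i : ℕ) + 1, h⟩ with hj
  have hij : i < j := by simp [hj, Fin.lt_def]
  have hle : x j ≤ x i := hmono i j hij
  by_contra hcon
  push_neg at hcon
  have heq : x i = x j := le_antisymm hcon hle
  have ht : 0 < x i := by
    rcases hposx with h' | h'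
    · exact h'
    · rw [heq]; exact h'
  have haij : a j < a i := ha hij
  have hai := hpos i; have haj := hpos j
  set ε : ℝ := min (x i) ((a i - a j) * (1 + x i) / (2 * (a i + a j))) with he
  have hε : 0 < ε := lt_min ht (div_pos (mul_pos (by linarith) (by linarith)) (by linarith))
  have hεt : ε ≤ x i := min_le_left _ _
  have hεb : ε * (a i + a j) < (a i - a j) * (1 + x i) := by
    have hmr : ε ≤ (a i - a j) * (1 + x i) / (2 * (a i + a j)) := min_le_right _ _
    rw [le_div_iff₀ (by linarith)] at hmr
    nlinarith
  have hk := key i j (ne_of_lt hij) (x i + ε) (x i - ε) (by linarith) (by linarith)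
    (by rw [← heq]; ring)
  rw [← heq] at hk
  have hp : (0:ℝ) < 1 + x i := hden i
  have hp1 : (0:ℝ) < 1 + (x i + ε) := by linarith
  have hp2 : (0:ℝ) < 1 + (x i - ε) := by linarith
  have e1 : a i / (1 + x i) - a i / (1 + (x i + ε)) = a i * ε / ((1 + x i) * (1 + (x i + ε))) := by
    field_simp
    ring
  have e2 : a j / (1 + (x i - ε)) - a j / (1 + x i) = a j * ε / ((1 + x i) * (1 + (x i - ε))) := by
    field_simp
    ring
  have hlt2 : a j * ε / ((1 + x i) * (1 + (x i - ε))) < a i * ε / ((1 + x i) * (1 + (x i + ε))) := by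
    rw [div_lt_div_iff₀ (mul_pos hp hp2) (mul_pos hp hp1)]
    nlinarith [mul_pos hp hε, mul_pos (mul_pos hp hε) (sub_pos.mpr haij)]
  linarith
end

section
/- Let a_1 > a_2 > ... > a_n > 0 and let x* ∈ S_n minimize G(x) = Σ_{i=1}^n a_i/(1+x_i) over S_n = {x : Σ x_i = 1, x_i ≥ 0}. If x*_j = 0 for some index j, then x*_i = 0 for every index i > j; in particular, the set of indices receiving a positive allocation is an initial segment {1, 2, ..., k} for some 1 ≤ k ≤ n. -/
/-- if `x` minimizes `G y = ∑ i, a i / (1 + y i)` over the simplex and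
`x j = 0`, then `x i = 0` for every `i > j`; in particular the set of indices with a
positive allocation is an initial segment `{0, 1, …, k-1}` (1-based: `{1, …, k}`) for
some `1 ≤ k ≤ n`. -/
theorem stmt_6 (n : ℕ) (hn : 2 ≤ n) (a : Fin n → ℝ)
    (ha : StrictAnti a) (hpos : ∀ i, 0 < a i)
    (x : Fin n → ℝ) (hx : ∑ i, x i = 1 ∧ ∀ i, 0 ≤ x i)
    (hmin : ∀ y : Fin n → ℝ, (∑ i, y i = 1 ∧ ∀ i, 0 ≤ y i) →
      ∑ i, a i / (1 + x i) ≤ ∑ i, a i / (1 + y i)) :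
    (∀ j i : Fin n, x j = 0 → j < i → x i = 0) ∧
    ∃ k : ℕ, 1 ≤ k ∧ k ≤ n ∧ ∀ i : Fin n, (0 < x i ↔ (i : ℕ) < k) := by
  obtain ⟨hsum, hnn⟩ := hx
  have key : ∀ j i : Fin n, x j = 0 → j < i → x i = 0 := by
    intro j i hj hji
    by_contra hne
    have hxi : 0 < x i := lt_of_le_of_ne (hnn i) (Ne.symm hne)
    have hji' : j ≠ i := ne_of_lt hji
    set y : Fin n → ℝ := x ∘ Equiv.swap j i with hy
    have hysum : ∑ k, y k = 1 := by
      rw [← hsum]; exact Equiv.sum_comp (Equiv.swap j i) x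
    have hynn : ∀ k, 0 ≤ y k := fun k => hnn _
    have hle := hmin y ⟨hysum, hynn⟩
    have hyj : y j = x i := by simp [hy, Equiv.swap_apply_left]
    have hyi : y i = x j := by simp [hy, Equiv.swap_apply_right]
    have hyk : ∀ k, k ≠ j → k ≠ i → y k = x k := fun k h1 h2 => by
      simp [hy, Equiv.swap_apply_of_ne_of_ne h1 h2]
    have hdiff : ∑ k, a k / (1 + y k) - ∑ k, a k / (1 + x k)
        = (a j / (1 + y j) - a j / (1 + x j)) + (a i / (1 + y i) - a i / (1 + x i)) := by
      rw [← Finset.sum_sub_distrib]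
      rw [← Finset.sum_subset (Finset.subset_univ ({j, i} : Finset (Fin n)))
        (by intro k _ hk
            simp only [Finset.mem_insert, Finset.mem_singleton, not_or] at hk
            rw [hyk k hk.1 hk.2]; ring)]
      rw [Finset.sum_pair hji']
    have h1 : (0 : ℝ) < 1 + x i := by linarith
    have hu : 1 / (1 + x i) < 1 := by rw [div_lt_one h1]; linarith
    have hu0 : 0 < 1 / (1 + x i) := by positivity
    have haij : a i < a j := ha hji
    have hcalc : (a j / (1 + y j) - a j / (1 + x j)) + (a i / (1 + y i) - a i / (1 + x i))
        = (a j - a i) * (1 / (1 + x i) - 1) := by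
      rw [hyj, hyi, hj]
      norm_num
      ring
    have hneg : (a j - a i) * (1 / (1 + x i) - 1) < 0 :=
      mul_neg_of_pos_of_neg (by linarith) (by linarith)
    rw [hcalc] at hdiff
    linarith
  refine ⟨key, ?_⟩
  by_cases hall : ∀ i, 0 < x i
  · exact ⟨n, by omega, le_refl n, fun i => ⟨fun _ => i.2, fun _ => hall i⟩⟩
  · push_neg at hall
    obtain ⟨j, hj⟩ := hall
    have hj0 : x j = 0 := le_antisymm hj (hnn j)
    have hs : (Finset.univ.filter (fun i => x i = 0)).Nonempty :=
      ⟨j, by simp [hj0]⟩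
    set j₀ := (Finset.univ.filter (fun i : Fin n => x i = 0)).min' hs with hj₀
    have hj₀0 : x j₀ = 0 := by
      have := (Finset.univ.filter (fun i : Fin n => x i = 0)).min'_mem hs
      simpa using this
    have hmin' : ∀ i : Fin n, x i = 0 → j₀ ≤ i := by
      intro i hi
      exact Finset.min'_le _ _ (by simp [hi])
    have h0pos : 0 < x ⟨0, by omega⟩ := by
      rcases lt_or_eq_of_le (hnn ⟨0, by omega⟩) with h | h
      · exact h
      · exfalso
        have hz : ∀ i : Fin n, x i = 0 := by
          intro i
          rcases Nat.eq_zero_or_pos (i : ℕ) with h2 | h2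
          · have : i = ⟨0, by omega⟩ := Fin.ext h2
            rw [this, ← h]
          · exact key ⟨0, by omega⟩ i h.symm (by simpa [Fin.lt_def] using h2)
        rw [Finset.sum_eq_zero (fun i _ => hz i)] at hsum
        norm_num at hsum
    refine ⟨(j₀ : ℕ), ?_, le_of_lt j₀.2, ?_⟩
    · by_contra hk
      have : (j₀ : ℕ) = 0 := by omega
      have : j₀ = ⟨0, by omega⟩ := Fin.ext this
      rw [this] at hj₀0
      linarith
    · intro i
      constructor
      · intro hxi
        by_contra hik
        push_neg at hik
        have : j₀ ≤ i := by rw [Fin.le_def]; exact hik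
        rcases lt_or_eq_of_le this with h | h
        · have := key j₀ i hj₀0 h
          linarith
        · rw [← h] at hxi; linarith
      · intro hik
        rcases lt_or_eq_of_le (hnn i) with h | h
        · exact h
        · exfalso
          have := hmin' i h.symm
          rw [Fin.le_def] at this
          omega
end

section
/- Interior-case closed form: let a_1 > a_2 > ... > a_n > 0, e_i = √(a_i/a_1) (so e_1 = 1), and suppose n·e_n > e_1 + e_2 + ... + e_{n−1}. Then the point x* with coordinates x*_j = (n·e_j − Σ_{i≠j} e_i)/(e_1 + ... + e_n), j = 1,...,n, lies in the simplex S_n with all coordinates strictly positive, and it is the unique maximizer of F(x) = Σ_{i=1}^n a_i x_i/(1+x_i) over S_n. -/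
/-!
Writing `F(y) = ∑ aᵢ - ∑ aᵢ / (1 + yᵢ)` and `tᵢ = 1 + yᵢ`, whose sum is `n + 1` on the simplex,
the Cauchy–Schwarz (Sedrakyan) identity
`∑ cᵢ² / tᵢ = (∑ cᵢ)² / ∑ tᵢ + ∑ (cᵢ - (∑ c) tᵢ / ∑ t)² / tᵢ` with `cᵢ = √aᵢ` shows that
`F ≤ ∑ aᵢ - (∑ √aᵢ)² / (n + 1)`, with equality exactly when `1 + yᵢ` is proportional to `√aᵢ`,
i.e. `1 + yᵢ ∝ eᵢ`. That point is `x*`, and the hypothesis on `eₙ` makes it interior.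
-/

open Finset

theorem sum_sq_div_eq_sq_sum_div_add {ι : Type*} (s : Finset ι) (c t : ι → ℝ)
    (ht : ∀ i ∈ s, t i ≠ 0) (hT : ∑ i ∈ s, t i ≠ 0) :
    ∑ i ∈ s, c i ^ 2 / t i = (∑ i ∈ s, c i) ^ 2 / ∑ i ∈ s, t i
      + ∑ i ∈ s, (c i - (∑ j ∈ s, c j) * t i / ∑ j ∈ s, t j) ^ 2 / t i := by
  set C := ∑ j ∈ s, c j
  set T := ∑ j ∈ s, t j
  have hterm : ∀ i ∈ s, (c i - C * t i / T) ^ 2 / t i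
      = c i ^ 2 / t i - 2 * C / T * c i + C ^ 2 / T ^ 2 * t i := by
    intro i hi
    field_simp [ht i hi]
    ring
  rw [sum_congr rfl hterm, sum_add_distrib, sum_sub_distrib, ← mul_sum, ← mul_sum]
  field_simp
  ring

namespace SimplexObjective

variable {ι : Type*} [Fintype ι] (c : ι → ℝ)

/-- `F` with weights `aᵢ = cᵢ²`. -/
noncomputable def objective (y : ι → ℝ) : ℝ := ∑ i, c i ^ 2 * y i / (1 + y i)

noncomputable def proportionalPoint (i : ι) : ℝ :=
  (Fintype.card ι + 1) * c i / (∑ j, c j) - 1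

variable {c}

theorem objective_add_sum_sq_div {y : ι → ℝ} (hy : ∑ i, y i = 1) (hy' : ∀ i, 1 + y i ≠ 0) :
    objective c y + ∑ i, (c i - (∑ j, c j) * (1 + y i) / (Fintype.card ι + 1)) ^ 2 / (1 + y i)
      = ∑ i, c i ^ 2 - (∑ i, c i) ^ 2 / (Fintype.card ι + 1) := by
  have hT : ∑ i, (1 + y i) = Fintype.card ι + 1 := by
    rw [sum_add_distrib, hy, sum_const, card_univ, nsmul_one, add_comm]
  have hobj : objective c y = ∑ i, c i ^ 2 - ∑ i, c i ^ 2 / (1 + y i) := by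
    rw [objective, ← sum_sub_distrib]
    refine sum_congr rfl fun i _ => ?_
    field_simp [hy' i]
    ring
  have key := sum_sq_div_eq_sq_sum_div_add univ c (fun i => 1 + y i) (fun i _ => hy' i)
    (by rw [hT]; positivity)
  rw [hT] at key
  rw [hobj, key]
  ring

theorem objective_le {y : ι → ℝ} (hy : y ∈ stdSimplex ℝ ι) :
    objective c y ≤ ∑ i, c i ^ 2 - (∑ i, c i) ^ 2 / (Fintype.card ι + 1) := by
  have hpos : ∀ i, 0 < 1 + y i := fun i => by linarith [hy.1 i]
  rw [← objective_add_sum_sq_div hy.2 fun i => (hpos i).ne']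
  have : 0 ≤ ∑ i, (c i - (∑ j, c j) * (1 + y i) / (Fintype.card ι + 1)) ^ 2 / (1 + y i) :=
    sum_nonneg fun i _ => div_nonneg (sq_nonneg _) (hpos i).le
  linarith

theorem eq_proportionalPoint_of_objective_eq (hc : ∑ i, c i ≠ 0) {y : ι → ℝ}
    (hy : y ∈ stdSimplex ℝ ι)
    (h : objective c y = ∑ i, c i ^ 2 - (∑ i, c i) ^ 2 / (Fintype.card ι + 1)) :
    y = proportionalPoint c := by
  have hpos : ∀ i, 0 < 1 + y i := fun i => by linarith [hy.1 i]
  have hgap := objective_add_sum_sq_div (c := c) hy.2 fun i => (hpos i).ne'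
  rw [h, add_eq_left, sum_eq_zero_iff_of_nonneg
    fun i _ => div_nonneg (sq_nonneg _) (hpos i).le] at hgap
  funext i
  have hi := hgap i (mem_univ i)
  rw [div_eq_zero_iff, or_iff_left (hpos i).ne', sq_eq_zero_iff, sub_eq_zero] at hi
  rw [proportionalPoint, hi]
  field_simp
  ring

theorem sum_proportionalPoint (hc : ∑ i, c i ≠ 0) : ∑ i, proportionalPoint c i = 1 := by
  simp only [proportionalPoint, sum_sub_distrib, ← sum_div, ← mul_sum, sum_const, card_univ,
    nsmul_one]
  field_simp
  ring

theorem proportionalPoint_pos (hc : 0 < ∑ i, c i) {i : ι}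
    (h : ∑ j, c j < (Fintype.card ι + 1) * c i) : 0 < proportionalPoint c i := by
  rwa [proportionalPoint, sub_pos, one_lt_div hc]

theorem proportionalPoint_smul {k : ℝ} (hk : k ≠ 0) :
    proportionalPoint (k • c) = proportionalPoint c := by
  funext i
  simp only [proportionalPoint, Pi.smul_apply, smul_eq_mul, ← mul_sum]
  rw [mul_left_comm, mul_div_mul_left _ _ hk]

theorem objective_proportionalPoint (hc : ∑ i, c i ≠ 0)
    (hp : proportionalPoint c ∈ stdSimplex ℝ ι) :
    objective c (proportionalPoint c)
      = ∑ i, c i ^ 2 - (∑ i, c i) ^ 2 / (Fintype.card ι + 1) := by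
  have hone : ∀ i, 1 + proportionalPoint c i = (Fintype.card ι + 1) * c i / ∑ j, c j :=
    fun i => by rw [proportionalPoint]; ring
  have hpos : ∀ i, 0 < 1 + proportionalPoint c i := fun i => by linarith [hp.1 i]
  rw [← objective_add_sum_sq_div hp.2 fun i => (hpos i).ne', left_eq_add]
  refine sum_eq_zero fun i _ => ?_
  rw [hone]
  field_simp
  ring

theorem isMaxOn_proportionalPoint (hc : ∑ i, c i ≠ 0)
    (hp : proportionalPoint c ∈ stdSimplex ℝ ι) :
    IsMaxOn (objective c) (stdSimplex ℝ ι) (proportionalPoint c) := fun _ hy =>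
  (objective_le hy).trans_eq (objective_proportionalPoint hc hp).symm

theorem eq_proportionalPoint_of_isMaxOn (hc : ∑ i, c i ≠ 0)
    (hp : proportionalPoint c ∈ stdSimplex ℝ ι) {z : ι → ℝ} (hz : z ∈ stdSimplex ℝ ι)
    (hmax : IsMaxOn (objective c) (stdSimplex ℝ ι) z) : z = proportionalPoint c := by
  refine eq_proportionalPoint_of_objective_eq hc hz (le_antisymm (objective_le hz) ?_)
  rw [← objective_proportionalPoint hc hp]
  exact hmax hp

end SimplexObjective

open SimplexObjective in
/-- interior-case closed form: with `e i = √(a i / a 0)` (so the first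
`e` equals 1), if `n * e_last > ∑ of the other e's`, then the point
`x* j = (n * e j - ∑_{i ≠ j} e i) / (∑ i, e i)` lies in the simplex with all
coordinates strictly positive, and it is the unique maximizer of
`F x = ∑ i, a i * x i / (1 + x i)` over the simplex. -/
theorem stmt_8 (n : ℕ) (hn : 2 ≤ n) (a : Fin n → ℝ)
    (ha : StrictAnti a) (hpos : ∀ i, 0 < a i)
    (e : Fin n → ℝ) (he : ∀ i, e i = Real.sqrt (a i / a ⟨0, by omega⟩))
    (hint : (∑ i ∈ Finset.univ.erase (⟨n - 1, by omega⟩ : Fin n), e i)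
      < (n : ℝ) * e ⟨n - 1, by omega⟩)
    (xs : Fin n → ℝ)
    (hxs : ∀ j, xs j =
      ((n : ℝ) * e j - ∑ i ∈ Finset.univ.erase j, e i) / ∑ i, e i) :
    (∑ j, xs j = 1 ∧ ∀ j, 0 < xs j) ∧
    (∀ y : Fin n → ℝ, (∑ i, y i = 1 ∧ ∀ i, 0 ≤ y i) →
      ∑ i, a i * y i / (1 + y i) ≤ ∑ i, a i * xs i / (1 + xs i)) ∧
    (∀ z : Fin n → ℝ, (∑ i, z i = 1 ∧ ∀ i, 0 ≤ z i) →
      (∀ y : Fin n → ℝ, (∑ i, y i = 1 ∧ ∀ i, 0 ≤ y i) →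
        ∑ i, a i * y i / (1 + y i) ≤ ∑ i, a i * z i / (1 + z i)) →
      z = xs) := by
  set c : Fin n → ℝ := fun i => √(a i)
  have hec : e = (√(a ⟨0, by omega⟩))⁻¹ • c := funext fun i => by
    rw [he, Real.sqrt_div (hpos i).le, div_eq_inv_mul]; rfl
  have he_pos : ∀ i, 0 < e i := fun i => by
    rw [he]; exact Real.sqrt_pos.2 (div_pos (hpos i) (hpos _))
  have hS : 0 < ∑ i, e i := sum_pos (fun i _ => he_pos i) ⟨⟨0, by omega⟩, mem_univ _⟩
  have hxe : xs = proportionalPoint e := funext fun j => by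
    rw [hxs, proportionalPoint, sum_erase_eq_sub (mem_univ j), Fintype.card_fin]
    field_simp
    ring
  have hx_pos : ∀ j, 0 < xs j := fun j => by
    have he_le : e ⟨n - 1, by omega⟩ ≤ e j := by
      rw [he, he]
      exact Real.sqrt_le_sqrt (div_le_div_of_nonneg_right
        (ha.antitone (Fin.mk_le_mk.2 (by omega))) (hpos _).le)
    rw [sum_erase_eq_sub (mem_univ _)] at hint
    rw [hxe]
    exact proportionalPoint_pos hS (by rw [Fintype.card_fin]; nlinarith)
  have hxc : xs = proportionalPoint c := by
    rw [hxe, hec, proportionalPoint_smul (inv_ne_zero (Real.sqrt_pos.2 (hpos _)).ne')]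
  have hc : ∑ i, c i ≠ 0 :=
    (sum_pos (fun i _ => Real.sqrt_pos.2 (hpos i)) ⟨⟨0, by omega⟩, mem_univ _⟩).ne'
  have hsum : ∑ j, xs j = 1 := hxc ▸ sum_proportionalPoint hc
  have hmem : proportionalPoint c ∈ stdSimplex ℝ (Fin n) :=
    hxc ▸ ⟨fun j => (hx_pos j).le, hsum⟩
  have hobj : ∀ y, ∑ i, a i * y i / (1 + y i) = objective c y := fun y => by
    simp only [objective, c, Real.sq_sqrt (hpos _).le]
  simp only [hobj]
  refine ⟨⟨hsum, hx_pos⟩, fun y hy => hxc ▸ isMaxOn_proportionalPoint hc hmem ⟨hy.2, hy.1⟩,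
    fun z hz hzmax => hxc ▸ eq_proportionalPoint_of_isMaxOn hc hmem ⟨hz.2, hz.1⟩
      fun y hy => hzmax y ⟨hy.2, hy.1⟩⟩
end

section
/- Algorithm correctness: let a_1 > a_2 > ... > a_n > 0 and e_i = √(a_i/a_1). If the set K = {j : 2 ≤ j ≤ n and j·e_j > e_1 + ... + e_{j−1}} is empty, then the unique maximizer of F(x) = Σ_{i=1}^n a_i x_i/(1+x_i) over the simplex S_n is x* = (1, 0, ..., 0). Otherwise, setting k* = max K, the unique maximizer is given by x*_j = (k*·e_j − Σ_{1 ≤ i ≤ k*, i≠j} e_i)/(e_1 + ... + e_{k*}) for j = 1,...,k*, and x*_j = 0 for j = k*+1,...,n. -/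
lemma aux_ineq (A lam x y : ℝ) (hA : 0 ≤ A) (hx : 0 ≤ x) (hy : 0 ≤ y)
    (hle : A ≤ lam * (1 + x) ^ 2) (heq : 0 < x → A = lam * (1 + x) ^ 2) :
    A * y / (1 + y) - A * x / (1 + x) ≤ lam * (y - x) := by
  have h1x : (0:ℝ) < 1 + x := by linarith
  have h1y : (0:ℝ) < 1 + y := by linarith
  have key : A * y / (1 + y) - A * x / (1 + x) = A * (y - x) / ((1 + x) * (1 + y)) := by
    field_simp; ring
  rw [key]
  have step1 : A * (y - x) / ((1 + x) * (1 + y)) ≤ A * (y - x) / (1 + x) ^ 2 := by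
    rw [div_le_div_iff₀ (by positivity) (by positivity)]
    nlinarith [mul_nonneg (mul_nonneg hA h1x.le) (sq_nonneg (y - x))]
  refine step1.trans ?_
  rcases hx.eq_or_lt with h | h
  · rw [← h] at hle ⊢
    have hA' : A ≤ lam := by nlinarith [hle]
    have : A * (y - 0) / (1 + 0) ^ 2 = A * y := by norm_num
    rw [this]
    nlinarith [mul_le_mul_of_nonneg_right hA' hy]
  · rw [heq h]
    have : lam * (1 + x) ^ 2 * (y - x) / (1 + x) ^ 2 = lam * (y - x) := by
      field_simp
    rw [this]

lemma concave_mid (A x y : ℝ) (hA : 0 ≤ A) (hx : 0 ≤ x) (hy : 0 ≤ y) :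
    (A * x / (1 + x) + A * y / (1 + y)) / 2 ≤ A * ((x + y) / 2) / (1 + (x + y) / 2) := by
  have h1x : (0:ℝ) < 1 + x := by linarith
  have h1y : (0:ℝ) < 1 + y := by linarith
  have h1m : (0:ℝ) < 1 + (x + y) / 2 := by linarith
  rw [div_le_div_iff₀ two_pos h1m, div_add_div _ _ h1x.ne' h1y.ne', div_mul_eq_mul_div,
    div_le_iff₀ (by positivity)]
  nlinarith [mul_nonneg hA (sq_nonneg (x - y))]

lemma strict_concave_mid (A x y : ℝ) (hA : 0 < A) (hx : 0 ≤ x) (hy : 0 ≤ y) (hne : x ≠ y) :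
    (A * x / (1 + x) + A * y / (1 + y)) / 2 < A * ((x + y) / 2) / (1 + (x + y) / 2) := by
  have h1x : (0:ℝ) < 1 + x := by linarith
  have h1y : (0:ℝ) < 1 + y := by linarith
  have h1m : (0:ℝ) < 1 + (x + y) / 2 := by linarith
  have hsq : 0 < (x - y) ^ 2 := by
    have := sub_ne_zero.mpr hne; positivity
  rw [div_lt_div_iff₀ two_pos h1m, div_add_div _ _ h1x.ne' h1y.ne', div_mul_eq_mul_div,
    div_lt_iff₀ (by positivity)]
  nlinarith [mul_pos hA hsq]

lemma opt_lemma (n : ℕ) (a : ℕ → ℝ) (ha : ∀ i < n, 0 ≤ a i)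
    (xs : Fin n → ℝ) (hsum : ∑ i, xs i = 1) (hnn : ∀ i, 0 ≤ xs i)
    (lam : ℝ) (hle : ∀ i : Fin n, a (i : ℕ) ≤ lam * (1 + xs i) ^ 2)
    (heq : ∀ i : Fin n, 0 < xs i → a (i : ℕ) = lam * (1 + xs i) ^ 2)
    (y : Fin n → ℝ) (hysum : ∑ i, y i = 1) (hynn : ∀ i, 0 ≤ y i) :
    ∑ i : Fin n, a (i : ℕ) * y i / (1 + y i) ≤ ∑ i : Fin n, a (i : ℕ) * xs i / (1 + xs i) := by
  have key : ∀ i : Fin n, a (i : ℕ) * y i / (1 + y i) - a (i : ℕ) * xs i / (1 + xs i) ≤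
      lam * (y i - xs i) :=
    fun i => aux_ineq _ _ _ _ (ha i i.isLt) (hnn i) (hynn i) (hle i) (heq i)
  have hsum2 : ∑ i : Fin n, (a (i : ℕ) * y i / (1 + y i) - a (i : ℕ) * xs i / (1 + xs i)) ≤
      ∑ i : Fin n, lam * (y i - xs i) := Finset.sum_le_sum fun i _ => key i
  rw [Finset.sum_sub_distrib] at hsum2
  have hz : ∑ i : Fin n, lam * (y i - xs i) = 0 := by
    rw [← Finset.mul_sum, Finset.sum_sub_distrib, hsum, hysum]; ring
  linarith

lemma uniq_lemma (n : ℕ) (a : ℕ → ℝ) (ha : ∀ i < n, 0 < a i)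
    (xs : Fin n → ℝ) (hxsum : ∑ i, xs i = 1) (hxnn : ∀ i, 0 ≤ xs i)
    (hmax : ∀ y : Fin n → ℝ, (∑ i, y i = 1 ∧ ∀ i, 0 ≤ y i) →
      ∑ i : Fin n, a (i : ℕ) * y i / (1 + y i) ≤ ∑ i : Fin n, a (i : ℕ) * xs i / (1 + xs i))
    (z : Fin n → ℝ) (hz : ∑ i, z i = 1 ∧ ∀ i, 0 ≤ z i)
    (hzmax : ∀ y : Fin n → ℝ, (∑ i, y i = 1 ∧ ∀ i, 0 ≤ y i) →
      ∑ i : Fin n, a (i : ℕ) * y i / (1 + y i) ≤ ∑ i : Fin n, a (i : ℕ) * z i / (1 + z i)) :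
    z = xs := by
  by_contra hne
  obtain ⟨i0, hi0⟩ := Function.ne_iff.mp hne
  have hwfeas : (∑ i : Fin n, (z i + xs i) / 2 = 1 ∧ ∀ i : Fin n, 0 ≤ (z i + xs i) / 2) := by
    constructor
    · rw [← Finset.sum_div, Finset.sum_add_distrib, hz.1, hxsum]; norm_num
    · intro i; have := hz.2 i; have := hxnn i; linarith
  have hFeq : ∑ i : Fin n, a (i : ℕ) * z i / (1 + z i) =
      ∑ i : Fin n, a (i : ℕ) * xs i / (1 + xs i) :=
    le_antisymm (hmax z hz) (hzmax xs ⟨hxsum, hxnn⟩)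
  have hstrict : ∑ i : Fin n, (a (i : ℕ) * z i / (1 + z i) + a (i : ℕ) * xs i / (1 + xs i)) / 2 <
      ∑ i : Fin n, a (i : ℕ) * ((z i + xs i) / 2) / (1 + (z i + xs i) / 2) := by
    apply Finset.sum_lt_sum
    · intro i _; exact concave_mid _ _ _ (ha i i.isLt).le (hz.2 i) (hxnn i)
    · exact ⟨i0, Finset.mem_univ _,
        strict_concave_mid _ _ _ (ha i0 i0.isLt) (hz.2 i0) (hxnn i0) hi0⟩
  have hle := hzmax (fun i => (z i + xs i) / 2) hwfeas
  have heqs : ∑ i : Fin n, (a (i : ℕ) * z i / (1 + z i) + a (i : ℕ) * xs i / (1 + xs i)) / 2 =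
      ∑ i : Fin n, a (i : ℕ) * z i / (1 + z i) := by
    rw [← Finset.sum_div, Finset.sum_add_distrib, ← hFeq]; ring
  linarith

/-- algorithm correctness. Coefficients are `a 0 > a 1 > ⋯ > a (n-1) > 0`
(0-based; `a 0` is the paper's `a₁`), `e i = √(a i / a 0)`, and
`K = {j : 2 ≤ j ≤ n ∧ j * e_j > e_1 + ⋯ + e_{j-1}}` (1-based `e_j` is `e (j-1)`).
If `K = ∅` the unique maximizer of `F x = ∑ i, a i * x i / (1 + x i)` over the simplex
is `(1, 0, …, 0)`; otherwise, with `k* = max K`, the unique maximizer is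
`x* j = (k* * e j - ∑_{i < k*, i ≠ j} e i) / (e_0 + ⋯ + e_{k*-1})` for `j < k*` and
`x* j = 0` for `j ≥ k*`. -/
theorem stmt_9 (n : ℕ) (hn : 2 ≤ n) (a : ℕ → ℝ)
    (ha : ∀ i j : ℕ, i < j → j < n → a j < a i) (hpos : ∀ i < n, 0 < a i)
    (e : ℕ → ℝ) (he : ∀ i, e i = Real.sqrt (a i / a 0))
    (K : Finset ℕ)
    (hK : K = (Finset.Icc 2 n).filter
      (fun j => (∑ i ∈ Finset.range (j - 1), e i) < (j : ℝ) * e (j - 1))) :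
    (K = ∅ →
      ((∀ y : Fin n → ℝ, (∑ i, y i = 1 ∧ ∀ i, 0 ≤ y i) →
        ∑ i : Fin n, a (i : ℕ) * y i / (1 + y i) ≤
          ∑ i : Fin n, a (i : ℕ) * (if (i : ℕ) = 0 then (1:ℝ) else 0) /
            (1 + (if (i : ℕ) = 0 then (1:ℝ) else 0))) ∧
      (∀ z : Fin n → ℝ, (∑ i, z i = 1 ∧ ∀ i, 0 ≤ z i) →
        (∀ y : Fin n → ℝ, (∑ i, y i = 1 ∧ ∀ i, 0 ≤ y i) →
          ∑ i : Fin n, a (i : ℕ) * y i / (1 + y i) ≤ ∑ i : Fin n, a (i : ℕ) * z i / (1 + z i)) →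
        z = fun i : Fin n => if (i : ℕ) = 0 then (1:ℝ) else 0))) ∧
    (∀ hne : K.Nonempty,
      ∀ xs : Fin n → ℝ,
      (∀ j : Fin n, xs j =
        if (j : ℕ) < K.max' hne then
          ((K.max' hne : ℝ) * e j -
            ((∑ i ∈ Finset.range (K.max' hne), e i) - e j)) /
          (∑ i ∈ Finset.range (K.max' hne), e i)
        else 0) →
      (∑ i, xs i = 1 ∧ ∀ i, 0 ≤ xs i) ∧
      (∀ y : Fin n → ℝ, (∑ i, y i = 1 ∧ ∀ i, 0 ≤ y i) →
        ∑ i : Fin n, a (i : ℕ) * y i / (1 + y i) ≤ ∑ i : Fin n, a (i : ℕ) * xs i / (1 + xs i)) ∧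
      (∀ z : Fin n → ℝ, (∑ i, z i = 1 ∧ ∀ i, 0 ≤ z i) →
        (∀ y : Fin n → ℝ, (∑ i, y i = 1 ∧ ∀ i, 0 ≤ y i) →
          ∑ i : Fin n, a (i : ℕ) * y i / (1 + y i) ≤ ∑ i : Fin n, a (i : ℕ) * z i / (1 + z i)) →
        z = xs)) := by
  have hb : 0 < a 0 := hpos 0 (by omega)
  have hepos : ∀ i, i < n → 0 < e i := fun i hi => by
    rw [he]; exact Real.sqrt_pos.mpr (div_pos (hpos i hi) hb)
  have hesq : ∀ i, i < n → a i = a 0 * e i ^ 2 := fun i hi => by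
    rw [he, Real.sq_sqrt (div_nonneg (hpos i hi).le hb.le)]
    field_simp
  have he0 : e 0 = 1 := by rw [he, div_self hb.ne', Real.sqrt_one]
  have hedec : ∀ i j : ℕ, i < j → j < n → e j < e i := fun i j hij hj => by
    rw [he, he]
    exact Real.sqrt_lt_sqrt (div_nonneg (hpos j hj).le hb.le)
      (by apply div_lt_div_of_pos_right (ha i j hij hj) hb)
  have hanneg : ∀ i < n, 0 ≤ a i := fun i hi => (hpos i hi).le
  constructor
  · -- Part 1 : K = ∅
    intro hKe
    have hnotK : ∀ j, 2 ≤ j → j ≤ n →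
        (j : ℝ) * e (j - 1) ≤ ∑ i ∈ Finset.range (j - 1), e i := by
      intro j h2 hjn
      by_contra hc
      push_neg at hc
      have : j ∈ K := by
        rw [hK, Finset.mem_filter, Finset.mem_Icc]
        exact ⟨⟨h2, hjn⟩, hc⟩
      rw [hKe] at this
      simp at this
    have he1 : e 1 ≤ 1 / 2 := by
      have h2 := hnotK 2 le_rfl hn
      norm_num [Finset.sum_range_one, he0] at h2
      linarith
    set xs : Fin n → ℝ := fun i : Fin n => if (i : ℕ) = 0 then (1:ℝ) else 0 with hxsdef
    have h0n : 0 < n := by omega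
    have hsum : ∑ i, xs i = 1 := by
      rw [hxsdef]
      rw [Finset.sum_eq_single_of_mem (⟨0, h0n⟩ : Fin n) (Finset.mem_univ _)
        (fun b _ hb' => if_neg (fun h => hb' (Fin.ext h)))]
      simp
    have hnn : ∀ i, 0 ≤ xs i := by
      intro i; rw [hxsdef]; dsimp only; split <;> norm_num
    have hle : ∀ i : Fin n, a (i : ℕ) ≤ a 0 / 4 * (1 + xs i) ^ 2 := by
      intro i
      rw [hxsdef]; dsimp only
      by_cases h : (i : ℕ) = 0
      · rw [if_pos h, h]; norm_num
      · rw [if_neg h]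
        have hi1 : e (i : ℕ) ≤ 1 / 2 := by
          rcases Nat.lt_or_ge 1 (i : ℕ) with h' | h'
          · exact le_of_lt (lt_of_lt_of_le (hedec 1 i h' i.isLt) he1)
          · have : (i : ℕ) = 1 := by omega
            rw [this]; exact he1
        have hie := hepos i i.isLt
        rw [hesq i i.isLt]
        nlinarith [mul_le_mul_of_nonneg_left
          (mul_le_mul hi1 hi1 hie.le (by norm_num : (0:ℝ) ≤ 1/2)) hb.le]
    have heq : ∀ i : Fin n, 0 < xs i → a (i : ℕ) = a 0 / 4 * (1 + xs i) ^ 2 := by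
      intro i hi
      rw [hxsdef] at hi ⊢; dsimp only at hi ⊢
      by_cases h : (i : ℕ) = 0
      · rw [if_pos h, h]; norm_num
      · rw [if_neg h] at hi; norm_num at hi
    have hopt := fun y hy1 hy2 =>
      opt_lemma n a hanneg xs hsum hnn (a 0 / 4) hle heq y hy1 hy2
    constructor
    · intro y hy; exact hopt y hy.1 hy.2
    · intro z hz hzmax
      exact uniq_lemma n a hpos xs hsum hnn (fun y hy => hopt y hy.1 hy.2) z hz hzmax
  · -- Part 2 : K nonempty
    intro hne xs hxs
    have hkK := K.max'_mem hne
    set k := K.max' hne with hkdef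
    rw [hK, Finset.mem_filter, Finset.mem_Icc] at hkK
    obtain ⟨⟨hk2, hkn⟩, hkcond⟩ := hkK
    set E := ∑ i ∈ Finset.range k, e i with hEdef
    have hE0 : E ≠ 0 := by
      have hEpos : 0 < E := by
        rw [hEdef]
        apply Finset.sum_pos
        · intro i hi
          exact hepos i (lt_of_lt_of_le (Finset.mem_range.mp hi) hkn)
        · exact ⟨0, Finset.mem_range.mpr (by omega)⟩
      exact hEpos.ne'
    have hEpos : 0 < E := by
      rw [hEdef]
      apply Finset.sum_pos
      · intro i hi
        exact hepos i (lt_of_lt_of_le (Finset.mem_range.mp hi) hkn)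
      · exact ⟨0, Finset.mem_range.mpr (by omega)⟩
    have hEsplit : E = (∑ i ∈ Finset.range (k - 1), e i) + e (k - 1) := by
      have h := Finset.sum_range_succ e (k - 1)
      rw [show k - 1 + 1 = k from by omega] at h
      rw [hEdef]
      exact h
    have hkey : E < ((k:ℝ) + 1) * e (k - 1) := by
      rw [hEsplit]
      nlinarith [hkcond]
    have hxsnum : ∀ j : ℕ, j < k → E < ((k:ℝ) + 1) * e j := by
      intro j hj
      rcases Nat.lt_or_ge j (k - 1) with h' | h'
      · have hlt := hedec j (k - 1) h' (by omega)
        have hmul : ((k:ℝ) + 1) * e (k - 1) ≤ ((k:ℝ) + 1) * e j :=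
          mul_le_mul_of_nonneg_left hlt.le (by positivity)
        linarith [hkey]
      · have hjk : j = k - 1 := by omega
        rw [hjk]; exact hkey
    have hxspos : ∀ j : Fin n, (j : ℕ) < k → 0 < xs j := by
      intro j hj
      rw [hxs j, if_pos hj]
      apply div_pos _ hEpos
      have hnum := hxsnum (j : ℕ) hj
      nlinarith [hnum]
    have hbound : ∀ j : ℕ, k ≤ j → j < n → ((k:ℝ) + 1) * e j ≤ E := by
      intro j hkj hjn
      have hk1 : k + 1 ∉ K := fun h => by
        have := K.le_max' _ h
        omega
      rw [hK, Finset.mem_filter, Finset.mem_Icc] at hk1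
      push_neg at hk1
      have h1 := hk1 ⟨by omega, by omega⟩
      have hsimp : k + 1 - 1 = k := by omega
      rw [hsimp, ← hEdef] at h1
      push_cast at h1
      have hek : e j ≤ e k := by
        rcases Nat.lt_or_ge k j with h' | h'
        · exact (hedec k j h' hjn).le
        · have : j = k := by omega
          rw [this]
      have := mul_le_mul_of_nonneg_left hek (by positivity : (0:ℝ) ≤ (k:ℝ) + 1)
      linarith
    have hsum_xs : ∑ i, xs i = 1 := by
      have h1 : ∑ i : Fin n, xs i =
          ∑ i ∈ Finset.range n, (if i < k then ((k:ℝ) * e i - (E - e i)) / E else 0) := by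
        rw [← Fin.sum_univ_eq_sum_range]
        exact Finset.sum_congr rfl fun i _ => hxs i
      have h2 : ∑ i ∈ Finset.range k, (if i < k then ((k:ℝ) * e i - (E - e i)) / E else 0)
          = ∑ i ∈ Finset.range k, ((k:ℝ) * e i - (E - e i)) / E :=
        Finset.sum_congr rfl fun x hx => if_pos (Finset.mem_range.mp hx)
      rw [h1, ← Finset.sum_subset (Finset.range_subset_range.mpr hkn)
        (fun x _ hx => if_neg (by simpa using hx)), h2, ← Finset.sum_div]
      have h3 : ∑ i ∈ Finset.range k, ((k:ℝ) * e i - (E - e i)) = E := by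
        have hc : ∀ i, (k:ℝ) * e i - (E - e i) = ((k:ℝ) + 1) * e i - E := fun i => by ring
        simp_rw [hc]
        rw [Finset.sum_sub_distrib, ← Finset.mul_sum, ← hEdef, Finset.sum_const,
          Finset.card_range, nsmul_eq_mul]
        ring
      rw [h3, div_self hE0]
    have hnn : ∀ i : Fin n, 0 ≤ xs i := by
      intro i
      by_cases h : (i : ℕ) < k
      · exact (hxspos i h).le
      · rw [hxs i, if_neg h]
    set lam : ℝ := a 0 * E ^ 2 / ((k:ℝ) + 1) ^ 2 with hlam
    have hk1pos : (0:ℝ) < (k:ℝ) + 1 := by positivity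
    have hk10 : ((k:ℝ) + 1) ≠ 0 := hk1pos.ne'
    have heq : ∀ i : Fin n, 0 < xs i → a (i : ℕ) = lam * (1 + xs i) ^ 2 := by
      intro i hi
      have hik : (i : ℕ) < k := by
        by_contra h
        rw [hxs i, if_neg h] at hi
        exact lt_irrefl 0 hi
      rw [hxs i, if_pos hik, hlam, hesq i i.isLt]
      field_simp
      ring
    have hle : ∀ i : Fin n, a (i : ℕ) ≤ lam * (1 + xs i) ^ 2 := by
      intro i
      by_cases h : (i : ℕ) < k
      · exact (heq i (hxspos i h)).le
      · push_neg at h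
        rw [hxs i, if_neg (not_lt.mpr h), hlam, hesq i i.isLt]
        have hb1 := hbound (i : ℕ) h i.isLt
        have hie := hepos (i : ℕ) i.isLt
        have hsq : ((k:ℝ) + 1) * e ↑i * (((k:ℝ) + 1) * e ↑i) ≤ E * E :=
          mul_le_mul hb1 hb1 (by positivity) hEpos.le
        rw [div_mul_eq_mul_div, le_div_iff₀ (by positivity)]
        nlinarith [mul_le_mul_of_nonneg_left hsq hb.le]
    have hopt : ∀ y : Fin n → ℝ, (∑ i, y i = 1 ∧ ∀ i, 0 ≤ y i) →
        ∑ i : Fin n, a (i : ℕ) * y i / (1 + y i) ≤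
          ∑ i : Fin n, a (i : ℕ) * xs i / (1 + xs i) :=
      fun y hy => opt_lemma n a hanneg xs hsum_xs hnn lam hle heq y hy.1 hy.2
    exact ⟨⟨hsum_xs, hnn⟩, hopt,
      fun z hz hzmax => uniq_lemma n a hpos xs hsum_xs hnn hopt z hz hzmax⟩
end

section
/- Two-cup solution: let a_1 > a_2 > 0. If a_2 > a_1/4, then the unique maximizer of F(x_1, x_2) = a_1 x_1/(1+x_1) + a_2 x_2/(1+x_2) over S_2 = {(x_1,x_2) : x_1 + x_2 = 1, x_1, x_2 ≥ 0} is (x*_1, x*_2) = ((2√a_1 − √a_2)/(√a_1 + √a_2), (2√a_2 − √a_1)/(√a_1 + √a_2)). If a_2 ≤ a_1/4, the unique maximizer is (1, 0). -/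
/-- Membership in the two-cup simplex `S₂`. -/
def MemS2 (x1 x2 : ℝ) : Prop := x1 + x2 = 1 ∧ 0 ≤ x1 ∧ 0 ≤ x2

/-- The two-cup objective. -/
noncomputable def F2 (a1 a2 x1 x2 : ℝ) : ℝ := a1 * x1 / (1 + x1) + a2 * x2 / (1 + x2)

/-- `(p1, p2)` is the unique maximizer of `F2 a1 a2` over `S₂`. -/
noncomputable def IsUniqueMax2 (a1 a2 p1 p2 : ℝ) : Prop :=
  MemS2 p1 p2 ∧
  (∀ y1 y2 : ℝ, MemS2 y1 y2 → F2 a1 a2 y1 y2 ≤ F2 a1 a2 p1 p2) ∧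
  (∀ z1 z2 : ℝ, MemS2 z1 z2 →
    (∀ y1 y2 : ℝ, MemS2 y1 y2 → F2 a1 a2 y1 y2 ≤ F2 a1 a2 z1 z2) →
    z1 = p1 ∧ z2 = p2)

set_option maxHeartbeats 2000000 in
/-- two-cup solution: if `a2 > a1/4` the unique maximizer of `F2` over
`S₂` is `((2√a1 - √a2)/(√a1 + √a2), (2√a2 - √a1)/(√a1 + √a2))`; if `a2 ≤ a1/4` it is
`(1, 0)`. -/
theorem stmt_10 (a1 a2 : ℝ) (h12 : a2 < a1) (h2 : 0 < a2) :
    (a1 / 4 < a2 →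
      IsUniqueMax2 a1 a2
        ((2 * Real.sqrt a1 - Real.sqrt a2) / (Real.sqrt a1 + Real.sqrt a2))
        ((2 * Real.sqrt a2 - Real.sqrt a1) / (Real.sqrt a1 + Real.sqrt a2))) ∧
    (a2 ≤ a1 / 4 → IsUniqueMax2 a1 a2 1 0) := by
  have h1 : 0 < a1 := h2.trans h12
  set s := Real.sqrt a1 with hsdef
  set t := Real.sqrt a2 with htdef
  have hs2 : s * s = a1 := Real.mul_self_sqrt h1.le
  have ht2 : t * t = a2 := Real.mul_self_sqrt h2.le
  have hs0 : 0 < s := Real.sqrt_pos.mpr h1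
  have ht0 : 0 < t := Real.sqrt_pos.mpr h2
  have hts : t < s := by
    rw [hsdef, htdef]; exact Real.sqrt_lt_sqrt h2.le h12
  have hst0 : 0 < s + t := by linarith
  constructor
  · -- case a1/4 < a2
    intro h4
    have h2t : s < 2 * t := by nlinarith
    set p1 := (2 * s - t) / (s + t) with hp1
    set p2 := (2 * t - s) / (s + t) with hp2
    have hmem : MemS2 p1 p2 := by
      refine ⟨by rw [hp1, hp2]; field_simp; ring, ?_, ?_⟩
      · exact div_nonneg (by linarith) hst0.le
      · exact div_nonneg (by linarith) hst0.le
    have e1 : 1 + p1 = 3 * s / (s + t) := by rw [hp1]; field_simp; ring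
    have e2 : 1 + p2 = 3 * t / (s + t) := by rw [hp2]; field_simp; ring
    have hFp : F2 a1 a2 p1 p2 = (2 * (s * s) - 2 * (s * t) + 2 * (t * t)) / 3 := by
      unfold F2
      rw [e1, e2, hp1, hp2, ← hs2, ← ht2]
      field_simp
      ring
    have key : ∀ y1 y2 : ℝ, MemS2 y1 y2 →
        F2 a1 a2 p1 p2 - F2 a1 a2 y1 y2 =
          ((s + t) * y1 - (2 * s - t)) ^ 2 / (3 * (1 + y1) * (1 + y2)) := by
      rintro y1 y2 ⟨hsum, hy1, hy2⟩
      have hy2' : y2 = 1 - y1 := by linarith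
      subst hy2'
      have d1 : (0:ℝ) < 1 + y1 := by linarith
      have d2 : (0:ℝ) < 1 + (1 - y1) := by linarith
      rw [hFp]
      unfold F2
      rw [← hs2, ← ht2]
      field_simp
      ring
    have hmax : ∀ y1 y2 : ℝ, MemS2 y1 y2 → F2 a1 a2 y1 y2 ≤ F2 a1 a2 p1 p2 := by
      intro y1 y2 hy
      have hk := key y1 y2 hy
      obtain ⟨hsum, hy1, hy2⟩ := hy
      have hden : (0:ℝ) < 3 * (1 + y1) * (1 + y2) := by nlinarith
      have : 0 ≤ ((s + t) * y1 - (2 * s - t)) ^ 2 / (3 * (1 + y1) * (1 + y2)) :=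
        div_nonneg (sq_nonneg _) hden.le
      linarith
    refine ⟨hmem, hmax, ?_⟩
    intro z1 z2 hz hzmax
    have h1' := hzmax p1 p2 hmem
    have h2' := hmax z1 z2 hz
    have heq : F2 a1 a2 p1 p2 = F2 a1 a2 z1 z2 := le_antisymm h1' h2'
    have hk := key z1 z2 hz
    obtain ⟨hsum, hz1, hz2⟩ := hz
    have hden : (0:ℝ) < 3 * (1 + z1) * (1 + z2) := by nlinarith
    have hq : ((s + t) * z1 - (2 * s - t)) ^ 2 / (3 * (1 + z1) * (1 + z2)) = 0 := by
      rw [← hk]; linarith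
    have hnum : ((s + t) * z1 - (2 * s - t)) ^ 2 = 0 := by
      rcases div_eq_zero_iff.mp hq with h | h
      · exact h
      · exact absurd h hden.ne'
    have hz1p : (s + t) * z1 - (2 * s - t) = 0 := sq_eq_zero_iff.mp hnum
    have hz1e : z1 = p1 := by
      rw [hp1, eq_div_iff hst0.ne']; linear_combination hz1p
    have hpsum : p1 + p2 = 1 := hmem.1
    exact ⟨hz1e, by linarith [hz1e]⟩
  · -- case a2 ≤ a1/4
    intro h4
    have h2t : 2 * t ≤ s := by nlinarith
    have hmem : MemS2 1 0 := ⟨by norm_num, by norm_num, le_refl 0⟩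
    have key : ∀ y1 y2 : ℝ, MemS2 y1 y2 →
        F2 a1 a2 1 0 - F2 a1 a2 y1 y2 =
          y2 * ((s * s) * (1 + y2) - 2 * (t * t) * (1 + y1)) / (2 * (1 + y1) * (1 + y2)) := by
      rintro y1 y2 ⟨hsum, hy1, hy2⟩
      have hy2' : y2 = 1 - y1 := by linarith
      subst hy2'
      have d1 : (0:ℝ) < 1 + y1 := by linarith
      have d2 : (0:ℝ) < 1 + (1 - y1) := by linarith
      unfold F2
      rw [← hs2, ← ht2]
      field_simp
      ring
    have hNpos : ∀ y1 y2 : ℝ, MemS2 y1 y2 →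
        0 ≤ (s * s) * (1 + y2) - 2 * (t * t) * (1 + y1) := by
      rintro y1 y2 ⟨hsum, hy1, hy2⟩
      have hy1' : y1 ≤ 1 := by linarith
      have hA : 0 ≤ (s - 2 * t) * (s + 2 * t) := mul_nonneg (by linarith) (by linarith)
      have hB : 0 ≤ s * s * y2 := mul_nonneg (mul_nonneg hs0.le hs0.le) hy2
      have hC : 0 ≤ t * t * (1 - y1) := mul_nonneg (mul_nonneg ht0.le ht0.le) (by linarith)
      nlinarith [hA, hB, hC]
    have hmax : ∀ y1 y2 : ℝ, MemS2 y1 y2 → F2 a1 a2 y1 y2 ≤ F2 a1 a2 1 0 := by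
      intro y1 y2 hy
      have hk := key y1 y2 hy
      have hN := hNpos y1 y2 hy
      obtain ⟨hsum, hy1, hy2⟩ := hy
      have hden : (0:ℝ) < 2 * (1 + y1) * (1 + y2) := by nlinarith
      have : 0 ≤ y2 * ((s * s) * (1 + y2) - 2 * (t * t) * (1 + y1)) / (2 * (1 + y1) * (1 + y2)) :=
        div_nonneg (mul_nonneg hy2 hN) hden.le
      linarith
    refine ⟨hmem, hmax, ?_⟩
    intro z1 z2 hz hzmax
    have h1' := hzmax 1 0 hmem
    have h2' := hmax z1 z2 hz
    have heq : F2 a1 a2 1 0 = F2 a1 a2 z1 z2 := le_antisymm h1' h2'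
    have hk := key z1 z2 hz
    obtain ⟨hsum, hz1, hz2⟩ := hz
    have hden : (0:ℝ) < 2 * (1 + z1) * (1 + z2) := by nlinarith
    have hq : z2 * ((s * s) * (1 + z2) - 2 * (t * t) * (1 + z1)) = 0 := by
      have : z2 * ((s * s) * (1 + z2) - 2 * (t * t) * (1 + z1)) / (2 * (1 + z1) * (1 + z2)) = 0 := by
        rw [← hk]; linarith
      rcases div_eq_zero_iff.mp this with h | h
      · exact h
      · exact absurd h hden.ne'
    have hz20 : z2 = 0 := by
      by_contra hne
      have hz2pos : 0 < z2 := lt_of_le_of_ne hz2 (Ne.symm hne)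
      have hz1' : z1 ≤ 1 := by linarith
      have hA : 0 ≤ (s - 2 * t) * (s + 2 * t) := mul_nonneg (by linarith) (by linarith)
      have hB : 0 < s * s * z2 := mul_pos (mul_pos hs0 hs0) hz2pos
      have hC : 0 ≤ t * t * (1 - z1) := mul_nonneg (mul_nonneg ht0.le ht0.le) (by linarith)
      have hN : 0 < (s * s) * (1 + z2) - 2 * (t * t) * (1 + z1) := by nlinarith [hA, hB, hC]
      exact absurd hq (ne_of_gt (mul_pos hz2pos hN))
    exact ⟨by linarith, hz20⟩
end

section
/- Two-cup threshold: let a_1 > a_2 > 0 and let (x*_1, x*_2) be the unique maximizer of F(x_1, x_2) = a_1 x_1/(1+x_1) + a_2 x_2/(1+x_2) over S_2 = {(x_1,x_2) : x_1 + x_2 = 1, x_1, x_2 ≥ 0}. Then x*_2 > 0 if and only if a_2 > a_1/4; that is, the lower-concentration cup is used at the optimum exactly when the smaller concentration exceeds one-fourth of the larger concentration. -/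
/-- two-cup threshold: if `(x1, x2)` is the unique maximizer of `F2`
over `S₂`, then `x2 > 0` iff `a2 > a1/4`. -/
theorem stmt_11 (a1 a2 : ℝ) (h12 : a2 < a1) (h2 : 0 < a2)
    (x1 x2 : ℝ) (hmax : IsUniqueMax2 a1 a2 x1 x2) :
    0 < x2 ↔ a1 / 4 < a2 := by
  obtain ⟨⟨hsum, hx1, hx2⟩, hmaxall, _⟩ := hmax
  have h1 : 0 < a1 := h2.trans h12
  constructor
  · intro hx2pos
    by_contra hle
    push_neg at hle
    have ht1 : x2 ≤ 1 := by linarith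
    have hd1 : (0:ℝ) < 1 + x1 := by linarith
    have hd2 : (0:ℝ) < 1 + x2 := by linarith
    have hlt : F2 a1 a2 x1 x2 < F2 a1 a2 1 0 := by
      unfold F2
      have hx1e : x1 = 1 - x2 := by linarith
      have hd1' : (0:ℝ) < 1 + (1 - x2) := by linarith
      rw [hx1e, div_add_div _ _ (ne_of_gt hd1') (ne_of_gt hd2)]
      rw [div_lt_iff₀ (mul_pos hd1' hd2)]
      norm_num
      have hkey : 0 ≤ (a1/4 - a2) * (x2 * (2 - x2)) :=
        mul_nonneg (by linarith) (mul_nonneg hx2 (by linarith))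
      nlinarith [hkey, mul_pos h1 (mul_pos hx2pos hx2pos)]
    have hge := hmaxall 1 0 ⟨by norm_num, by norm_num, le_refl 0⟩
    linarith
  · intro ha
    by_contra hx2z
    push_neg at hx2z
    have hx2e : x2 = 0 := le_antisymm hx2z hx2
    have hx1e : x1 = 1 := by linarith
    set t : ℝ := (4*a2 - a1)/(2*(2*a2+a1)) with htdef
    have hs : (0:ℝ) < 2*(2*a2+a1) := by linarith
    have htnum : (0:ℝ) < 4*a2 - a1 := by linarith
    have ht0 : 0 < t := div_pos htnum hs
    have ht1 : t ≤ 1 := by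
      rw [htdef, div_le_one hs]; linarith
    have hts : t * (2*(2*a2+a1)) = 4*a2 - a1 := div_mul_cancel₀ _ (ne_of_gt hs)
    have hd1 : (0:ℝ) < 1 + (1 - t) := by linarith
    have hd2 : (0:ℝ) < 1 + t := by linarith
    have hgt : F2 a1 a2 x1 x2 < F2 a1 a2 (1-t) t := by
      rw [hx1e, hx2e]
      unfold F2
      rw [div_add_div _ _ (ne_of_gt hd1) (ne_of_gt hd2)]
      rw [lt_div_iff₀ (mul_pos hd1 hd2)]
      norm_num
      nlinarith [mul_pos ht0 htnum, mul_pos ht0 ht0]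
    have hge := hmaxall (1-t) t ⟨by ring, by linarith, le_of_lt ht0⟩
    linarith
end

section
/- Two-cup optimal value: let a_1 > a_2 > 0 with a_2 > a_1/4. Then the maximum of F(x_1, x_2) = a_1 x_1/(1+x_1) + a_2 x_2/(1+x_2) over S_2 = {(x_1,x_2) : x_1 + x_2 = 1, x_1, x_2 ≥ 0} equals a_1 + a_2 − (√a_1 + √a_2)²/3. -/
/-- two-cup optimal value: for `a1 > a2 > a1/4 > 0`, the maximum of
`F2 a1 a2` over `S₂` equals `a1 + a2 - (√a1 + √a2)²/3`. -/
theorem stmt_12 (a1 a2 : ℝ) (h12 : a2 < a1) (h2 : 0 < a2) (hq : a1 / 4 < a2) :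
    IsGreatest {v : ℝ | ∃ x1 x2 : ℝ, MemS2 x1 x2 ∧ F2 a1 a2 x1 x2 = v}
      (a1 + a2 - (Real.sqrt a1 + Real.sqrt a2) ^ 2 / 3) := by
  have h1 : 0 < a1 := h2.trans h12
  set s1 := Real.sqrt a1 with hs1def
  set s2 := Real.sqrt a2 with hs2def
  have hs1 : 0 < s1 := Real.sqrt_pos.mpr h1
  have hs2 : 0 < s2 := Real.sqrt_pos.mpr h2
  have hsq1 : s1 ^ 2 = a1 := Real.sq_sqrt h1.le
  have hsq2 : s2 ^ 2 = a2 := Real.sq_sqrt h2.le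
  have h21 : s2 < s1 := Real.sqrt_lt_sqrt h2.le h12
  have h14 : s1 < 2 * s2 := by
    nlinarith [hsq1, hsq2, hs1, hs2]
  have hsum : 0 < s1 + s2 := by linarith
  constructor
  · -- membership
    refine ⟨(2*s1 - s2)/(s1+s2), (2*s2 - s1)/(s1+s2), ⟨?_, ?_, ?_⟩, ?_⟩
    · field_simp; ring
    · apply div_nonneg (by linarith) hsum.le
    · apply div_nonneg (by linarith) hsum.le
    · have hd1 : 1 + (2*s1 - s2)/(s1+s2) = 3*s1/(s1+s2) := by field_simp; ring
      have hd2 : 1 + (2*s2 - s1)/(s1+s2) = 3*s2/(s1+s2) := by field_simp; ring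
      rw [F2, hd1, hd2, ← hsq1, ← hsq2]
      field_simp
      ring
  · -- upper bound
    rintro v ⟨x1, x2, ⟨hsum12, hx1, hx2⟩, rfl⟩
    have hu : (0:ℝ) < 1 + x1 := by linarith
    have hv : (0:ℝ) < 1 + x2 := by linarith
    have hx2e : x2 = 1 - x1 := by linarith
    subst hx2e
    rw [F2, ← hsq1, ← hsq2]
    rw [div_add_div _ _ (ne_of_gt hu) (ne_of_gt hv), div_le_iff₀ (by positivity)]
    nlinarith [sq_nonneg (s1*(1+(1-x1)) - s2*(1+x1))]
end

section
/- Three-cup solution: let a_1 > a_2 > a_3 > 0 and e_i = √(a_i/a_1) (so e_1 = 1). The unique maximizer (x*_1, x*_2, x*_3) of F(x) = Σ_{i=1}^3 a_i x_i/(1+x_i) over the simplex S_3 is: ((3e_1 − e_2 − e_3)/(e_1+e_2+e_3), (3e_2 − e_1 − e_3)/(e_1+e_2+e_3), (3e_3 − e_1 − e_2)/(e_1+e_2+e_3)) if 3e_3 > e_1 + e_2; ((2e_1 − e_2)/(e_1+e_2), (2e_2 − e_1)/(e_1+e_2), 0) if 3e_3 ≤ e_1 + e_2 and 2e_2 > e_1;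 and (1, 0, 0) if 3e_3 ≤ e_1 + e_2 and 2e_2 ≤ e_1. -/
/-- Membership in the three-cup simplex `S₃`. -/
def MemS3 (x1 x2 x3 : ℝ) : Prop := x1 + x2 + x3 = 1 ∧ 0 ≤ x1 ∧ 0 ≤ x2 ∧ 0 ≤ x3

/-- The three-cup objective. -/
noncomputable def F3 (a1 a2 a3 x1 x2 x3 : ℝ) : ℝ :=
  a1 * x1 / (1 + x1) + a2 * x2 / (1 + x2) + a3 * x3 / (1 + x3)

/-- `(p1, p2, p3)` is the unique maximizer of `F3 a1 a2 a3` over `S₃`. -/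
noncomputable def IsUniqueMax3 (a1 a2 a3 p1 p2 p3 : ℝ) : Prop :=
  MemS3 p1 p2 p3 ∧
  (∀ y1 y2 y3 : ℝ, MemS3 y1 y2 y3 →
    F3 a1 a2 a3 y1 y2 y3 ≤ F3 a1 a2 a3 p1 p2 p3) ∧
  (∀ z1 z2 z3 : ℝ, MemS3 z1 z2 z3 →
    (∀ y1 y2 y3 : ℝ, MemS3 y1 y2 y3 →
      F3 a1 a2 a3 y1 y2 y3 ≤ F3 a1 a2 a3 z1 z2 z3) →
    z1 = p1 ∧ z2 = p2 ∧ z3 = p3)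

lemma tangentBound (a lam x : ℝ) (ha : 0 < a) (hl : 0 < lam) (hx : 0 ≤ x) :
    a*x/(1+x) ≤ (Real.sqrt a - Real.sqrt lam)^2 + lam*x ∧
    (a*x/(1+x) = (Real.sqrt a - Real.sqrt lam)^2 + lam*x ↔
      Real.sqrt lam * (1+x) = Real.sqrt a) := by
  have h1 : (0:ℝ) < 1 + x := by linarith
  set sa := Real.sqrt a with hsadef
  set sl := Real.sqrt lam with hsldef
  have hsa : sa^2 = a := Real.sq_sqrt ha.le
  have hsl : sl^2 = lam := Real.sq_sqrt hl.le
  have key : ((sa - sl)^2 + lam*x)*(1+x) - a*x = (sa - sl*(1+x))^2 := by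
    rw [← hsa, ← hsl]; ring
  constructor
  · rw [div_le_iff₀ h1]
    nlinarith [sq_nonneg (sa - sl*(1+x))]
  · rw [div_eq_iff h1.ne']
    constructor
    · intro h
      have h2 : (sa - sl*(1+x))^2 = 0 := by linarith
      have h3 : sa - sl*(1+x) = 0 := sq_eq_zero_iff.mp h2
      linarith
    · intro h
      have h2 : (sa - sl*(1+x))^2 = 0 := by rw [h]; ring
      linarith

lemma zeroBound (a lam x : ℝ) (ha : 0 < a) (hal : a ≤ lam) (hx : 0 ≤ x) :
    a*x/(1+x) ≤ 0 + lam*x ∧ (a*x/(1+x) = 0 + lam*x ↔ x = 0) := by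
  have h1 : (0:ℝ) < 1 + x := by linarith
  rcases eq_or_lt_of_le hx with h0 | h0
  · simp [← h0]
  · have k1 : a*x/(1+x) < a*x := div_lt_self (by positivity) (by linarith)
    have k2 : a*x ≤ lam*x := mul_le_mul_of_nonneg_right hal hx
    exact ⟨by linarith, by constructor <;> intro h <;> linarith⟩

lemma solve_iff (s t x : ℝ) (hs : s ≠ 0) : s*(1+x) = t ↔ x = (t - s)/s := by
  rw [eq_div_iff hs]
  constructor <;> intro h <;> linear_combination h

lemma assemble (a1 a2 a3 lam c1 c2 c3 p1 p2 p3 : ℝ)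
    (hp : MemS3 p1 p2 p3)
    (h1 : ∀ x : ℝ, 0 ≤ x → a1*x/(1+x) ≤ c1 + lam*x ∧ (a1*x/(1+x) = c1 + lam*x ↔ x = p1))
    (h2 : ∀ x : ℝ, 0 ≤ x → a2*x/(1+x) ≤ c2 + lam*x ∧ (a2*x/(1+x) = c2 + lam*x ↔ x = p2))
    (h3 : ∀ x : ℝ, 0 ≤ x → a3*x/(1+x) ≤ c3 + lam*x ∧ (a3*x/(1+x) = c3 + lam*x ↔ x = p3)) :
    IsUniqueMax3 a1 a2 a3 p1 p2 p3 := by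
  obtain ⟨hs, q1, q2, q3⟩ := hp
  have E1 : a1*p1/(1+p1) = c1 + lam*p1 := ((h1 p1 q1).2).mpr rfl
  have E2 : a2*p2/(1+p2) = c2 + lam*p2 := ((h2 p2 q2).2).mpr rfl
  have E3 : a3*p3/(1+p3) = c3 + lam*p3 := ((h3 p3 q3).2).mpr rfl
  have Fp : F3 a1 a2 a3 p1 p2 p3 = c1 + c2 + c3 + lam := by
    simp only [F3]; rw [E1, E2, E3]; linear_combination lam * hs
  have bound : ∀ y1 y2 y3 : ℝ, MemS3 y1 y2 y3 →
      F3 a1 a2 a3 y1 y2 y3 ≤ c1 + c2 + c3 + lam := by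
    rintro y1 y2 y3 ⟨hys, hy1, hy2, hy3⟩
    have b1 := (h1 y1 hy1).1
    have b2 := (h2 y2 hy2).1
    have b3 := (h3 y3 hy3).1
    have hl : lam*y1 + lam*y2 + lam*y3 = lam := by linear_combination lam*hys
    simp only [F3]; linarith
  refine ⟨⟨hs, q1, q2, q3⟩, ?_, ?_⟩
  · intro y1 y2 y3 hy; rw [Fp]; exact bound _ _ _ hy
  · rintro z1 z2 z3 ⟨hzs, hz1, hz2, hz3⟩ hmax
    have hFz : F3 a1 a2 a3 z1 z2 z3 = c1 + c2 + c3 + lam :=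
      le_antisymm (bound _ _ _ ⟨hzs, hz1, hz2, hz3⟩)
        (by rw [← Fp]; exact hmax p1 p2 p3 ⟨hs, q1, q2, q3⟩)
    have b1 := (h1 z1 hz1).1
    have b2 := (h2 z2 hz2).1
    have b3 := (h3 z3 hz3).1
    have hl : lam*z1 + lam*z2 + lam*z3 = lam := by linear_combination lam*hzs
    simp only [F3] at hFz
    have g1 : a1*z1/(1+z1) = c1 + lam*z1 := by linarith
    have g2 : a2*z2/(1+z2) = c2 + lam*z2 := by linarith
    have g3 : a3*z3/(1+z3) = c3 + lam*z3 := by linarith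
    exact ⟨(h1 z1 hz1).2.mp g1, (h2 z2 hz2).2.mp g2, (h3 z3 hz3).2.mp g3⟩


/-- three-cup solution: with `e1 = 1`, `e2 = √(a2/a1)`, `e3 = √(a3/a1)`,
the unique maximizer of `F3` over `S₃` is given by the three-case formula of the
paper's algorithm. -/
theorem stmt_14 (a1 a2 a3 : ℝ) (h12 : a2 < a1) (h23 : a3 < a2) (h3 : 0 < a3)
    (e1 e2 e3 : ℝ) (he1 : e1 = Real.sqrt (a1 / a1)) (he2 : e2 = Real.sqrt (a2 / a1))
    (he3 : e3 = Real.sqrt (a3 / a1)) :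
    (e1 + e2 < 3 * e3 →
      IsUniqueMax3 a1 a2 a3
        ((3 * e1 - e2 - e3) / (e1 + e2 + e3))
        ((3 * e2 - e1 - e3) / (e1 + e2 + e3))
        ((3 * e3 - e1 - e2) / (e1 + e2 + e3))) ∧
    (3 * e3 ≤ e1 + e2 → e1 < 2 * e2 →
      IsUniqueMax3 a1 a2 a3
        ((2 * e1 - e2) / (e1 + e2)) ((2 * e2 - e1) / (e1 + e2)) 0) ∧
    (3 * e3 ≤ e1 + e2 → 2 * e2 ≤ e1 →
      IsUniqueMax3 a1 a2 a3 1 0 0) := by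
  have ha2 : 0 < a2 := by linarith
  have ha1 : 0 < a1 := by linarith
  set t1 := Real.sqrt a1 with ht1d
  set t2 := Real.sqrt a2 with ht2d
  set t3 := Real.sqrt a3 with ht3d
  have ht1 : 0 < t1 := Real.sqrt_pos.mpr ha1
  have ht2 : 0 < t2 := Real.sqrt_pos.mpr ha2
  have ht3 : 0 < t3 := Real.sqrt_pos.mpr h3
  have h21 : t2 < t1 := Real.sqrt_lt_sqrt ha2.le h12
  have h32 : t3 < t2 := Real.sqrt_lt_sqrt h3.le h23
  have hs1 : t1^2 = a1 := Real.sq_sqrt ha1.le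
  have hs2 : t2^2 = a2 := Real.sq_sqrt ha2.le
  have hs3 : t3^2 = a3 := Real.sq_sqrt h3.le
  have hE1 : e1 = 1 := by rw [he1, div_self ha1.ne', Real.sqrt_one]
  have hE2 : e2 = t2/t1 := by rw [he2, Real.sqrt_div ha2.le]
  have hE3 : e3 = t3/t1 := by rw [he3, Real.sqrt_div h3.le]
  have he2p : 0 < e2 := by rw [hE2]; positivity
  have he3p : 0 < e3 := by rw [hE3]; positivity
  have he2l : e2 < 1 := by rw [hE2]; exact (div_lt_one ht1).mpr h21
  have he32 : e3 < e2 := by rw [hE2, hE3]; gcongr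
  refine ⟨?_, ?_, ?_⟩
  · -- Case 1: interior
    intro hc
    have hc' : t1 + t2 < 3*t3 := by
      rw [hE1, hE2, hE3] at hc
      have h := mul_lt_mul_of_pos_right hc ht1
      field_simp at h
      linarith
    have hT : 0 < t1+t2+t3 := by linarith
    have hl : (0:ℝ) < ((t1+t2+t3)/4)^2 := by positivity
    have hslam : Real.sqrt (((t1+t2+t3)/4)^2) = (t1+t2+t3)/4 :=
      Real.sqrt_sq (by positivity)
    have hEpos : 0 < e1+e2+e3 := by rw [hE1]; linarith
    have hE0 : e1+e2+e3 ≠ 0 := hEpos.ne'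
    have hp1 : (3*e1-e2-e3)/(e1+e2+e3) = (t1-(t1+t2+t3)/4)/((t1+t2+t3)/4) := by
      rw [hE1, hE2, hE3]; field_simp; ring
    have hp2 : (3*e2-e1-e3)/(e1+e2+e3) = (t2-(t1+t2+t3)/4)/((t1+t2+t3)/4) := by
      rw [hE1, hE2, hE3]; field_simp; ring
    have hp3 : (3*e3-e1-e2)/(e1+e2+e3) = (t3-(t1+t2+t3)/4)/((t1+t2+t3)/4) := by
      rw [hE1, hE2, hE3]; field_simp; ring
    have hmem : MemS3 ((3*e1-e2-e3)/(e1+e2+e3)) ((3*e2-e1-e3)/(e1+e2+e3))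
        ((3*e3-e1-e2)/(e1+e2+e3)) := by
      refine ⟨by field_simp; ring, ?_, ?_, ?_⟩
      · exact div_nonneg (by rw [hE1]; linarith) hEpos.le
      · exact div_nonneg (by rw [hE1] at hc ⊢; linarith) hEpos.le
      · exact div_nonneg (by linarith) hEpos.le
    refine assemble a1 a2 a3 (((t1+t2+t3)/4)^2)
      ((t1-(t1+t2+t3)/4)^2) ((t2-(t1+t2+t3)/4)^2) ((t3-(t1+t2+t3)/4)^2)
      _ _ _ hmem ?_ ?_ ?_
    · intro x hx
      have h := tangentBound a1 (((t1+t2+t3)/4)^2) x ha1 hl hx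
      rw [hslam, ← ht1d] at h
      refine ⟨h.1, ?_⟩
      rw [h.2, solve_iff _ _ _ (by positivity : ((t1+t2+t3)/4) ≠ 0), hp1]
    · intro x hx
      have h := tangentBound a2 (((t1+t2+t3)/4)^2) x ha2 hl hx
      rw [hslam, ← ht2d] at h
      refine ⟨h.1, ?_⟩
      rw [h.2, solve_iff _ _ _ (by positivity : ((t1+t2+t3)/4) ≠ 0), hp2]
    · intro x hx
      have h := tangentBound a3 (((t1+t2+t3)/4)^2) x h3 hl hx
      rw [hslam, ← ht3d] at h
      refine ⟨h.1, ?_⟩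
      rw [h.2, solve_iff _ _ _ (by positivity : ((t1+t2+t3)/4) ≠ 0), hp3]
  · -- Case 2: edge
    intro hc hd
    have hc' : 3*t3 ≤ t1 + t2 := by
      rw [hE1, hE2, hE3] at hc
      have h := mul_le_mul_of_nonneg_right hc ht1.le
      field_simp at h
      linarith
    have hd' : t1 < 2*t2 := by
      rw [hE1, hE2] at hd
      have h := mul_lt_mul_of_pos_right hd ht1
      field_simp at h
      linarith
    have hS : 0 < t1+t2 := by linarith
    have hl : (0:ℝ) < ((t1+t2)/3)^2 := by positivity
    have hslam : Real.sqrt (((t1+t2)/3)^2) = (t1+t2)/3 := Real.sqrt_sq (by positivity)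
    have hEpos : 0 < e1+e2 := by rw [hE1]; linarith
    have hE0 : e1+e2 ≠ 0 := hEpos.ne'
    have ha3lam : a3 ≤ ((t1+t2)/3)^2 := by
      rw [← hs3]
      exact pow_le_pow_left₀ ht3.le (by linarith) 2
    have hp1 : (2*e1-e2)/(e1+e2) = (t1-(t1+t2)/3)/((t1+t2)/3) := by
      rw [hE1, hE2]; field_simp; ring
    have hp2 : (2*e2-e1)/(e1+e2) = (t2-(t1+t2)/3)/((t1+t2)/3) := by
      rw [hE1, hE2]; field_simp; ring
    have hmem : MemS3 ((2*e1-e2)/(e1+e2)) ((2*e2-e1)/(e1+e2)) 0 := by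
      refine ⟨by field_simp; ring, ?_, ?_, le_refl 0⟩
      · exact div_nonneg (by rw [hE1]; linarith) hEpos.le
      · exact div_nonneg (by rw [hE1] at hd ⊢; linarith) hEpos.le
    refine assemble a1 a2 a3 (((t1+t2)/3)^2)
      ((t1-(t1+t2)/3)^2) ((t2-(t1+t2)/3)^2) 0 _ _ _ hmem ?_ ?_ ?_
    · intro x hx
      have h := tangentBound a1 (((t1+t2)/3)^2) x ha1 hl hx
      rw [hslam, ← ht1d] at h
      refine ⟨h.1, ?_⟩
      rw [h.2, solve_iff _ _ _ (by positivity : ((t1+t2)/3) ≠ 0), hp1]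
    · intro x hx
      have h := tangentBound a2 (((t1+t2)/3)^2) x ha2 hl hx
      rw [hslam, ← ht2d] at h
      refine ⟨h.1, ?_⟩
      rw [h.2, solve_iff _ _ _ (by positivity : ((t1+t2)/3) ≠ 0), hp2]
    · intro x hx
      exact zeroBound a3 (((t1+t2)/3)^2) x h3 ha3lam hx
  · -- Case 3: vertex
    intro hc hd
    have hd' : 2*t2 ≤ t1 := by
      rw [hE1, hE2] at hd
      have h := mul_le_mul_of_nonneg_right hd ht1.le
      field_simp at h
      linarith
    have hl : (0:ℝ) < (t1/2)^2 := by positivity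
    have hslam : Real.sqrt ((t1/2)^2) = t1/2 := Real.sqrt_sq (by positivity)
    have ha2lam : a2 ≤ (t1/2)^2 := by
      rw [← hs2]
      exact pow_le_pow_left₀ ht2.le (by linarith) 2
    have ha3lam : a3 ≤ (t1/2)^2 := by
      rw [← hs3]
      exact pow_le_pow_left₀ ht3.le (by linarith) 2
    have hp1 : (1:ℝ) = (t1-t1/2)/(t1/2) := by
      rw [show t1 - t1/2 = t1/2 by ring, div_self (by positivity : (t1/2) ≠ 0)]
    have hmem : MemS3 1 0 0 := ⟨by norm_num, by norm_num, le_refl 0, le_refl 0⟩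
    refine assemble a1 a2 a3 ((t1/2)^2) ((t1-t1/2)^2) 0 0 _ _ _ hmem ?_ ?_ ?_
    · intro x hx
      have h := tangentBound a1 ((t1/2)^2) x ha1 hl hx
      rw [hslam, ← ht1d] at h
      refine ⟨h.1, ?_⟩
      rw [h.2, solve_iff _ _ _ (by positivity : (t1/2) ≠ 0), ← hp1]
    · intro x hx
      exact zeroBound a2 ((t1/2)^2) x ha2 ha2lam hx
    · intro x hx
      exact zeroBound a3 ((t1/2)^2) x h3 ha3lam hx
end

section
/- Three-cup instance (80%, 40%, 25%): for a_1 = 4/5, a_2 = 2/5, a_3 = 1/4, the unique maximizer (x*_1, x*_2, x*_3) of F(x) = Σ_{i=1}^3 a_i x_i/(1+x_i) over the simplex S_3 satisfies x*_3 = 0, x*_1 > 0, and x*_2 > 0; explicitly, x*_1 = (2 − √(1/2))/(1 + √(1/2)) and x*_2 = (2√(1/2) − 1)/(1 + √(1/2)). In particular, the cup with the lowest concentration is not used. -/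
lemma ident' (a3 L p1 p2 y1 y2 y3 : ℝ)
    (hp1 : 1+p1 ≠ 0) (hp2 : 1+p2 ≠ 0) (hy1 : 1+y1 ≠ 0) (hy2 : 1+y2 ≠ 0) (hy3 : 1+y3 ≠ 0)
    (hpsum : p2 = 1 - p1) (hysum : y3 = 1 - y1 - y2) :
    F3 (L*(1+p1)^2) (L*(1+p2)^2) a3 y1 y2 y3 = F3 (L*(1+p1)^2) (L*(1+p2)^2) a3 p1 p2 0
      - ((L*(1+p1)^2)*(y1-p1)^2/((1+y1)*(1+p1)^2) + (L*(1+p2)^2)*(y2-p2)^2/((1+y2)*(1+p2)^2)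
        + a3*y3^2/(1+y3) + (L - a3)*y3) := by
  subst hpsum hysum
  unfold F3
  field_simp
  ring

lemma s_sq' : (Real.sqrt (1/2))^2 = 1/2 := Real.sq_sqrt (by norm_num)
lemma s_lb' : (0.7:ℝ) < Real.sqrt (1/2) := by
  nlinarith [s_sq', Real.sqrt_nonneg (1/2:ℝ)]
lemma s_ub' : Real.sqrt (1/2) < 0.71 := by
  nlinarith [s_sq', Real.sqrt_nonneg (1/2:ℝ)]

lemma bnd (L q y : ℝ) (hq : 0 ≤ q) (hL : 1/5 ≤ L) (hy0 : 0 ≤ y) (hy1 : y ≤ 1) :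
    (1/10)*q ≤ L*q/(1+y) := by
  rw [le_div_iff₀ (by linarith)]
  nlinarith [mul_nonneg (sub_nonneg.mpr hL) hq, mul_nonneg (sub_nonneg.mpr hy1) hq]

lemma key' (y1 y2 y3 : ℝ) (h1 : 0 ≤ y1) (h2 : 0 ≤ y2) (h3 : 0 ≤ y3) (hsum : y1+y2+y3 = 1) :
    F3 (4/5) (2/5) (1/4) y1 y2 y3
      + (1/10)*(y1 - (2 - Real.sqrt (1/2)) / (1 + Real.sqrt (1/2)))^2
      + (1/20)*(y2 - (2 * Real.sqrt (1/2) - 1) / (1 + Real.sqrt (1/2)))^2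
      + (1/200)*y3
    ≤ F3 (4/5) (2/5) (1/4)
        ((2 - Real.sqrt (1/2)) / (1 + Real.sqrt (1/2)))
        ((2 * Real.sqrt (1/2) - 1) / (1 + Real.sqrt (1/2))) 0 := by
  set s := Real.sqrt (1/2) with hs_def
  have hs2 : s^2 = 1/2 := s_sq'
  have hlb : (0.7:ℝ) < s := s_lb'
  have hub : s < 0.71 := s_ub'
  set p1 : ℝ := (2 - s) / (1 + s) with hp1_def
  set p2 : ℝ := (2*s - 1) / (1 + s) with hp2_def
  set L : ℝ := (6 + 8*s)/45 with hL_def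
  have hs1 : (1:ℝ) + s ≠ 0 := by positivity
  have ha1 : (4:ℝ)/5 = L*(1+p1)^2 := by
    rw [hp1_def, hL_def]; field_simp; ring_nf; nlinarith [hs2]
  have ha2 : (2:ℝ)/5 = L*(1+p2)^2 := by
    rw [hp2_def, hL_def]; field_simp; ring_nf; nlinarith [hs2]
  have hpsum : p2 = 1 - p1 := by rw [hp1_def, hp2_def]; field_simp; ring
  have hysum : y3 = 1 - y1 - y2 := by linarith
  have hy1 : (0:ℝ) < 1+y1 := by linarith
  have hy2 : (0:ℝ) < 1+y2 := by linarith
  have hy3 : (0:ℝ) < 1+y3 := by linarith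
  have e1 : 1 + p1 = 3/(1+s) := by rw [hp1_def]; field_simp; ring
  have e2 : 1 + p2 = 3*s/(1+s) := by rw [hp2_def]; field_simp; ring
  have hnp1 : (0:ℝ) < 1+p1 := by rw [e1]; positivity
  have hnp2 : (0:ℝ) < 1+p2 := by rw [e2]; positivity
  have hLlb : (1:ℝ)/5 ≤ L := by rw [hL_def]; nlinarith
  have id := ident' (1/4) L p1 p2 y1 y2 y3 hnp1.ne' hnp2.ne' hy1.ne' hy2.ne' hy3.ne'
    hpsum hysum
  rw [← ha1, ← ha2] at id
  rw [id]
  have r1 : L*(1+p1)^2*(y1-p1)^2/((1+y1)*(1+p1)^2) = L*(y1-p1)^2/(1+y1) := by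
    field_simp
  have r2 : L*(1+p2)^2*(y2-p2)^2/((1+y2)*(1+p2)^2) = L*(y2-p2)^2/(1+y2) := by
    field_simp
  rw [← ha1] at r1
  rw [← ha2] at r2
  rw [r1, r2]
  have b1 : (1/10)*(y1-p1)^2 ≤ L*(y1-p1)^2/(1+y1) :=
    bnd L _ y1 (sq_nonneg _) hLlb h1 (by linarith)
  have b2' : (1/10)*(y2-p2)^2 ≤ L*(y2-p2)^2/(1+y2) :=
    bnd L _ y2 (sq_nonneg _) hLlb h2 (by linarith)
  have b2 : (1/20)*(y2-p2)^2 ≤ L*(y2-p2)^2/(1+y2) := by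
    linarith [sq_nonneg (y2-p2)]
  have b3 : (0:ℝ) ≤ (1/4)*y3^2/(1+y3) := by positivity
  have hL4 : (1/200:ℝ) ≤ L - 1/4 := by rw [hL_def]; linarith
  have b4 : (1/200)*y3 ≤ (L-1/4)*y3 := mul_le_mul_of_nonneg_right hL4 h3
  linarith

/-- three cups at 80 %, 40 %, 25 %: for `a1 = 4/5`, `a2 = 2/5`,
`a3 = 1/4`, the unique maximizer of `F3` over `S₃` is
`((2 - √(1/2))/(1 + √(1/2)), (2√(1/2) - 1)/(1 + √(1/2)), 0)`, and it satisfies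
`x1* > 0`, `x2* > 0`, `x3* = 0`: the lowest-concentration cup is not used. -/
theorem stmt_15 :
    IsUniqueMax3 (4/5) (2/5) (1/4)
      ((2 - Real.sqrt (1/2)) / (1 + Real.sqrt (1/2)))
      ((2 * Real.sqrt (1/2) - 1) / (1 + Real.sqrt (1/2))) 0 ∧
    0 < (2 - Real.sqrt (1/2)) / (1 + Real.sqrt (1/2)) ∧
    0 < (2 * Real.sqrt (1/2) - 1) / (1 + Real.sqrt (1/2)) := by
  have hs2 : (Real.sqrt (1/2))^2 = 1/2 := s_sq'
  have hlb : (0.7:ℝ) < Real.sqrt (1/2) := s_lb'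
  have hub : Real.sqrt (1/2) < 0.71 := s_ub'
  set s := Real.sqrt (1/2) with hs_def
  have hs1 : (0:ℝ) < 1 + s := by linarith
  have hp1pos : 0 < (2 - s) / (1 + s) := div_pos (by linarith) hs1
  have hp2pos : 0 < (2*s - 1) / (1 + s) := div_pos (by linarith) hs1
  have hmem : MemS3 ((2 - s) / (1 + s)) ((2*s - 1) / (1 + s)) 0 := by
    refine ⟨?_, hp1pos.le, hp2pos.le, le_refl 0⟩
    field_simp
    ring
  refine ⟨⟨hmem, ?_, ?_⟩, hp1pos, hp2pos⟩
  · rintro y1 y2 y3 ⟨hsum, h1, h2, h3⟩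
    have := key' y1 y2 y3 h1 h2 h3 hsum
    nlinarith [sq_nonneg (y1 - (2 - s)/(1+s)), sq_nonneg (y2 - (2*s-1)/(1+s))]
  · rintro z1 z2 z3 ⟨hsum, h1, h2, h3⟩ hmax
    have hk := key' z1 z2 z3 h1 h2 h3 hsum
    have hge := hmax _ _ _ hmem
    have e1 : (z1 - (2 - s)/(1+s))^2 = 0 := by
      nlinarith [sq_nonneg (z1 - (2 - s)/(1+s)), sq_nonneg (z2 - (2*s-1)/(1+s))]
    have e2 : (z2 - (2*s - 1)/(1+s))^2 = 0 := by
      nlinarith [sq_nonneg (z1 - (2 - s)/(1+s)), sq_nonneg (z2 - (2*s-1)/(1+s))]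
    have e3 : z3 = 0 := by
      nlinarith [sq_nonneg (z1 - (2 - s)/(1+s)), sq_nonneg (z2 - (2*s-1)/(1+s))]
    refine ⟨?_, ?_, e3⟩
    · have := pow_eq_zero_iff (n := 2) (by norm_num) |>.mp e1
      linarith [sub_eq_zero.mp this]
    · have := pow_eq_zero_iff (n := 2) (by norm_num) |>.mp e2
      linarith [sub_eq_zero.mp this]
end

section
/- General optimal value: let a_1 > a_2 > ... > a_n > 0, e_i = √(a_i/a_1), and suppose the set K = {j : 2 ≤ j ≤ n and j·e_j > e_1 + ... + e_{j−1}} is nonempty with k* = max K. Then the maximum of F(x) = Σ_{i=1}^n a_i x_i/(1+x_i) over the simplex S_n equals Σ_{i=1}^{k*} a_i − (Σ_{i=1}^{k*} √a_i)²/(k* + 1). -/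
/-- Tangent-line / AM-GM bound: for `b, t ≥ 0`,
`b*t/(1+t) ≤ b + μ² - 2√b μ + μ² t`. -/
lemma stmt18_aux (b μ t : ℝ) (hb : 0 ≤ b) (ht : 0 ≤ t) :
    b * t / (1 + t) ≤ b + μ ^ 2 - 2 * Real.sqrt b * μ + μ ^ 2 * t := by
  have hu : (0:ℝ) < 1 + t := by linarith
  rw [div_le_iff₀ hu]
  have h1 : Real.sqrt b ^ 2 = b := Real.sq_sqrt hb
  nlinarith [sq_nonneg (Real.sqrt b - μ * (1 + t))]

/-- general optimal value. Coefficients are `a 0 > a 1 > ⋯ > a (n-1) > 0`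
(0-based; `a 0` is the paper's `a₁`), `e i = √(a i / a 0)`, and
`K = {j : 2 ≤ j ≤ n ∧ j * e_j > e_1 + ⋯ + e_{j-1}}` (1-based `e_j` is `e (j - 1)`).
If `K` is nonempty with `k* = max K`, then the maximum of
`F x = ∑ i, a i * x i / (1 + x i)` over the simplex equals
`∑_{i<k*} a i - (∑_{i<k*} √(a i))² / (k* + 1)`. -/
theorem stmt_18 (n : ℕ) (hn : 2 ≤ n) (a : ℕ → ℝ)
    (ha : ∀ i j : ℕ, i < j → j < n → a j < a i) (hpos : ∀ i < n, 0 < a i)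
    (e : ℕ → ℝ) (he : ∀ i, e i = Real.sqrt (a i / a 0))
    (K : Finset ℕ)
    (hK : K = (Finset.Icc 2 n).filter
      (fun j => (∑ i ∈ Finset.range (j - 1), e i) < (j : ℝ) * e (j - 1)))
    (hne : K.Nonempty) (k : ℕ) (hk : k = K.max' hne) :
    IsGreatest
      {v : ℝ | ∃ x : Fin n → ℝ, (∑ i, x i = 1 ∧ ∀ i, 0 ≤ x i) ∧
        ∑ i : Fin n, a (i : ℕ) * x i / (1 + x i) = v}
      ((∑ i ∈ Finset.range k, a i) -
        (∑ i ∈ Finset.range k, Real.sqrt (a i)) ^ 2 / (k + 1)) := by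
  have ha0 : 0 < a 0 := hpos 0 (by omega)
  have hs0pos : 0 < Real.sqrt (a 0) := Real.sqrt_pos.2 ha0
  -- basic facts about k
  have hkK : k ∈ K := hk ▸ K.max'_mem hne
  have hkmem := hkK
  rw [hK, Finset.mem_filter, Finset.mem_Icc] at hkmem
  obtain ⟨⟨hk2, hkn⟩, hkey⟩ := hkmem
  -- translate e to sqrt
  have hE : ∀ i < n, Real.sqrt (a 0) * e i = Real.sqrt (a i) := by
    intro i hi
    rw [he, Real.sqrt_div (hpos i hi).le, mul_comm,
      div_mul_cancel₀ _ (ne_of_gt hs0pos)]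
  -- a is antitone on range n (≤ version)
  have hmono : ∀ i j : ℕ, i ≤ j → j < n → a j ≤ a i := by
    intro i j hij hj
    rcases eq_or_lt_of_le hij with rfl | h
    · exact le_refl _
    · exact (ha i j h hj).le
  set s : ℝ := ∑ i ∈ Finset.range k, Real.sqrt (a i) with hs
  have hspos : 0 < s := by
    apply Finset.sum_pos
    · intro i hi
      exact Real.sqrt_pos.2 (hpos i (lt_of_lt_of_le (Finset.mem_range.1 hi) hkn))
    · exact ⟨0, Finset.mem_range.2 (by omega)⟩
  -- condition A: s < (k+1) * √(a (k-1))
  have hA : s < (k + 1 : ℝ) * Real.sqrt (a (k - 1)) := by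
    have h1 : (∑ i ∈ Finset.range (k - 1), Real.sqrt (a i))
        < (k : ℝ) * Real.sqrt (a (k - 1)) := by
      have := mul_lt_mul_of_pos_left hkey hs0pos
      rw [Finset.mul_sum] at this
      calc (∑ i ∈ Finset.range (k - 1), Real.sqrt (a i))
          = ∑ i ∈ Finset.range (k - 1), Real.sqrt (a 0) * e i := by
            apply Finset.sum_congr rfl
            intro i hi
            exact (hE i (by have := Finset.mem_range.1 hi; omega)).symm
        _ < Real.sqrt (a 0) * ((k : ℝ) * e (k - 1)) := this
        _ = (k : ℝ) * (Real.sqrt (a 0) * e (k - 1)) := by ring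
        _ = (k : ℝ) * Real.sqrt (a (k - 1)) := by rw [hE (k - 1) (by omega)]
    have h2 : s = (∑ i ∈ Finset.range (k - 1), Real.sqrt (a i))
        + Real.sqrt (a (k - 1)) := by
      have hk' : k = k - 1 + 1 := by omega
      rw [hs]
      conv_lhs => rw [hk']
      rw [Finset.sum_range_succ]
    rw [h2]
    linarith
  -- condition B: if k < n then (k+1) * √(a k) ≤ s
  have hB : k < n → (k + 1 : ℝ) * Real.sqrt (a k) ≤ s := by
    intro hlt
    have hnotin : k + 1 ∉ K := by
      intro hmem
      have h := K.le_max' (k + 1) hmem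
      rw [← hk] at h
      omega
    rw [hK, Finset.mem_filter, Finset.mem_Icc] at hnotin
    push_neg at hnotin
    have hle := hnotin ⟨by omega, by omega⟩
    simp only [Nat.add_sub_cancel] at hle
    have hmul := mul_le_mul_of_nonneg_left hle hs0pos.le
    rw [Finset.mul_sum] at hmul
    calc (k + 1 : ℝ) * Real.sqrt (a k)
        = ((k : ℝ) + 1) * (Real.sqrt (a 0) * e k) := by
          rw [hE k hlt]
      _ = Real.sqrt (a 0) * ((((k + 1 : ℕ)) : ℝ) * e k) := by push_cast; ring
      _ ≤ ∑ i ∈ Finset.range k, Real.sqrt (a 0) * e i := hmul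
      _ = s := by
          rw [hs]
          apply Finset.sum_congr rfl
          intro i hi
          exact hE i (by have := Finset.mem_range.1 hi; omega)
  set μ : ℝ := s / (k + 1) with hμ
  have hk1pos : (0:ℝ) < (k : ℝ) + 1 := by positivity
  have hμpos : 0 < μ := div_pos hspos hk1pos
  -- a i bounded by μ² for i ≥ k, i < n
  have hbig : ∀ i : ℕ, k ≤ i → i < n → a i ≤ μ ^ 2 := by
    intro i hki hin
    have h1 : a i ≤ a k := hmono k i hki hin
    have h2 : Real.sqrt (a k) ≤ μ := by
      have := hB (by omega)
      rw [hμ, le_div_iff₀ hk1pos]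
      linarith
    have h3 : a k ≤ μ ^ 2 := by
      have := Real.sq_sqrt (hpos k (by omega)).le
      nlinarith [Real.sqrt_nonneg (a k)]
    linarith
  -- for i < k : (k+1)√(a i) > s
  have hsmall : ∀ i : ℕ, i < k → s < (k + 1 : ℝ) * Real.sqrt (a i) := by
    intro i hik
    have h1 : a (k - 1) ≤ a i := hmono i (k - 1) (by omega) (by omega)
    have h2 : Real.sqrt (a (k - 1)) ≤ Real.sqrt (a i) := Real.sqrt_le_sqrt h1
    nlinarith
  constructor
  · -- membership: the optimizer
    refine ⟨fun i => if (i : ℕ) < k then (k + 1 : ℝ) * Real.sqrt (a i) / s - 1 else 0,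
      ⟨?_, ?_⟩, ?_⟩
    · beta_reduce
      rw [Fin.sum_univ_eq_sum_range
        (fun j => if j < k then (k + 1 : ℝ) * Real.sqrt (a j) / s - 1 else 0) n]
      rw [← Finset.sum_subset (Finset.range_subset_range.2 hkn)
        (fun i _ hi => if_neg (fun h => hi (Finset.mem_range.2 h)))]
      rw [Finset.sum_congr rfl
        (fun i hi => if_pos (Finset.mem_range.1 hi))]
      rw [Finset.sum_sub_distrib, Finset.sum_const, Finset.card_range, nsmul_eq_mul,
        mul_one]
      have hrw : ∑ i ∈ Finset.range k, (k + 1 : ℝ) * Real.sqrt (a i) / s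
          = ((k : ℝ) + 1) / s * s := by
        rw [Finset.sum_congr rfl
          (fun i _ => by rw [show (k + 1 : ℝ) * Real.sqrt (a i) / s
            = ((k : ℝ) + 1) / s * Real.sqrt (a i) by ring]),
          ← Finset.mul_sum, ← hs]
      rw [hrw, div_mul_cancel₀ _ (ne_of_gt hspos)]
      ring
    · intro i
      beta_reduce
      by_cases hik : (i : ℕ) < k
      · rw [if_pos hik]
        have := hsmall i hik
        rw [sub_nonneg, le_div_iff₀ hspos]
        linarith
      · rw [if_neg hik]
    · beta_reduce
      rw [Fin.sum_univ_eq_sum_range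
        (fun j => a j * (if j < k then (k + 1 : ℝ) * Real.sqrt (a j) / s - 1 else 0)
          / (1 + (if j < k then (k + 1 : ℝ) * Real.sqrt (a j) / s - 1 else 0))) n]
      have hz : ∀ i ∈ Finset.range n, i ∉ Finset.range k →
          a i * (if i < k then (k + 1 : ℝ) * Real.sqrt (a i) / s - 1 else 0)
            / (1 + (if i < k then (k + 1 : ℝ) * Real.sqrt (a i) / s - 1 else 0)) = 0 := by
        intro i _ hi
        rw [if_neg (fun h => hi (Finset.mem_range.2 h))]
        simp
      rw [← Finset.sum_subset (Finset.range_subset_range.2 hkn) hz]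
      have hterm : ∀ i ∈ Finset.range k,
          a i * (if i < k then (k + 1 : ℝ) * Real.sqrt (a i) / s - 1 else 0)
            / (1 + (if i < k then (k + 1 : ℝ) * Real.sqrt (a i) / s - 1 else 0))
          = a i - Real.sqrt (a i) * (s / ((k : ℝ) + 1)) := by
        intro i hi
        have hik := Finset.mem_range.1 hi
        rw [if_pos hik]
        have hipos : 0 < a i := hpos i (by omega)
        have hsq : Real.sqrt (a i) ^ 2 = a i := Real.sq_sqrt hipos.le
        have hsqpos : 0 < Real.sqrt (a i) := Real.sqrt_pos.2 hipos
        have hsne : s ≠ 0 := ne_of_gt hspos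
        have hkne : ((k : ℝ) + 1) ≠ 0 := ne_of_gt hk1pos
        have hrne : Real.sqrt (a i) ≠ 0 := ne_of_gt hsqpos
        have hune : (1 : ℝ) + ((k + 1 : ℝ) * Real.sqrt (a i) / s - 1) ≠ 0 := by
          have : (1 : ℝ) + ((k + 1 : ℝ) * Real.sqrt (a i) / s - 1)
              = (k + 1 : ℝ) * Real.sqrt (a i) / s := by ring
          rw [this]
          positivity
        field_simp
        linear_combination (((k:ℝ) + 1) * s) * hsq
      rw [Finset.sum_congr rfl hterm, Finset.sum_sub_distrib]
      have hrw2 : ∑ i ∈ Finset.range k, Real.sqrt (a i) * (s / ((k : ℝ) + 1))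
          = s * (s / ((k : ℝ) + 1)) := by
        rw [← Finset.sum_mul, ← hs]
      rw [hrw2]
      ring
  · -- upper bound
    rintro v ⟨x, ⟨hsum, hnn⟩, rfl⟩
    have hbound : ∀ i : Fin n,
        a (i : ℕ) * x i / (1 + x i)
          ≤ (if (i : ℕ) < k then a i + μ ^ 2 - 2 * Real.sqrt (a i) * μ else 0)
            + μ ^ 2 * x i := by
      intro i
      by_cases hik : (i : ℕ) < k
      · rw [if_pos hik]
        have := stmt18_aux (a i) μ (x i) (hpos i (by omega)).le (hnn i)
        linarith
      · rw [if_neg hik]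
        have hin : (i : ℕ) < n := i.2
        have h1 : a (i : ℕ) ≤ μ ^ 2 := hbig i (by omega) hin
        have h2 : a (i : ℕ) * x i / (1 + x i) ≤ a (i : ℕ) * x i := by
          apply div_le_self
          · exact mul_nonneg (le_of_lt (hpos i hin)) (hnn i)
          · linarith [hnn i]
        have h3 : a (i : ℕ) * x i ≤ μ ^ 2 * x i :=
          mul_le_mul_of_nonneg_right h1 (hnn i)
        linarith
    calc ∑ i : Fin n, a (i : ℕ) * x i / (1 + x i)
        ≤ ∑ i : Fin n,
            ((if (i : ℕ) < k then a i + μ ^ 2 - 2 * Real.sqrt (a i) * μ else 0)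
              + μ ^ 2 * x i) := Finset.sum_le_sum (fun i _ => hbound i)
      _ = (∑ i : Fin n, (if (i : ℕ) < k then a i + μ ^ 2 - 2 * Real.sqrt (a i) * μ else 0))
            + μ ^ 2 * ∑ i : Fin n, x i := by
          rw [Finset.sum_add_distrib, Finset.mul_sum]
      _ = (∑ i ∈ Finset.range k, (a i + μ ^ 2 - 2 * Real.sqrt (a i) * μ)) + μ ^ 2 := by
          rw [hsum, mul_one]
          congr 1
          rw [Fin.sum_univ_eq_sum_range
            (fun i => if i < k then a i + μ ^ 2 - 2 * Real.sqrt (a i) * μ else 0) n]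
          rw [← Finset.sum_subset (Finset.range_subset_range.2 hkn)
            (fun i _ hi => if_neg (fun h => hi (Finset.mem_range.2 h)))]
          exact Finset.sum_congr rfl (fun i hi => if_pos (Finset.mem_range.1 hi))
      _ = (∑ i ∈ Finset.range k, a i) - s ^ 2 / (k + 1) := by
          have hexp : ∑ i ∈ Finset.range k, (a i + μ ^ 2 - 2 * Real.sqrt (a i) * μ)
              = (∑ i ∈ Finset.range k, a i) + (k : ℝ) * μ ^ 2 - 2 * s * μ := by
            rw [Finset.sum_sub_distrib, Finset.sum_add_distrib, Finset.sum_const,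
              Finset.card_range, nsmul_eq_mul]
            have h2s : ∑ i ∈ Finset.range k, 2 * Real.sqrt (a i) * μ
                = 2 * s * μ := by
              rw [hs, Finset.mul_sum, Finset.sum_mul]
            rw [h2s]
          rw [hexp, hμ]
          field_simp
          ring
end
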